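/- arXiv:math/0611538 — 6 statements merged into one kernel-verified Lean document; each statement's English description precedes it below -/
import Mathlib

section
/- For every integer n ≥ 2 and all integers ℓ, u ≥ 0, the counts A satisfy the recursion A(n,ℓ,u) = A(n−1,ℓ−1,u) + A(n−1,ℓ,u−1) + (n−2)·A(n−1,ℓ,u), where any term A(n−1,·,·) with a negative argument is taken to be 0. -/
open Finset

/-- `π j` is a lower record: it is the minimum among the first `j+1` entries. -/
def isLowerRecord {n : ℕ} (π : Equiv.Perm (Fin n)) (j : Fin n) : Prop :=
  ∀ k, k ≤ j → π j ≤ π k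

/-- `π j` is an upper record: it is the maximum among the first `j+1` entries. -/
def isUpperRecord {n : ℕ} (π : Equiv.Perm (Fin n)) (j : Fin n) : Prop :=
  ∀ k, k ≤ j → π k ≤ π j

instance {n : ℕ} (π : Equiv.Perm (Fin n)) (j : Fin n) : Decidable (isLowerRecord π j) :=
  inferInstanceAs (Decidable (∀ k, k ≤ j → π j ≤ π k))

instance {n : ℕ} (π : Equiv.Perm (Fin n)) (j : Fin n) : Decidable (isUpperRecord π j) :=
  inferInstanceAs (Decidable (∀ k, k ≤ j → π k ≤ π j))

/-- number of proper (position ≥ 2, i.e. index ≥ 1) lower records -/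
def properLowerCount {n : ℕ} (π : Equiv.Perm (Fin n)) : ℕ :=
  (univ.filter fun j : Fin n => 0 < j.val ∧ isLowerRecord π j).card

/-- number of proper (position ≥ 2, i.e. index ≥ 1) upper records -/
def properUpperCount {n : ℕ} (π : Equiv.Perm (Fin n)) : ℕ :=
  (univ.filter fun j : Fin n => 0 < j.val ∧ isUpperRecord π j).card

/-- `A n ℓ u` = number of permutations of `{1,…,n}` with exactly `ℓ` proper lower
records and exactly `u` proper upper records. -/
def A (n ℓ u : ℕ) : ℕ :=
  (univ.filter fun π : Equiv.Perm (Fin n) =>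
    properLowerCount π = ℓ ∧ properUpperCount π = u).card

/-!
A permutation of `Fin (m + 1)` is determined by its last value `v` together with the pattern
`σ : Perm (Fin m)` of its first `m` values, and its records before the last position are those
of `σ`. The last position is a lower record iff `v = 0` and an upper record iff `v = last m`;
for `m ≥ 1` these are two distinct values, and the remaining `m - 1` values add no record.
-/

namespace Equiv.Perm

variable {m : ℕ}

/-- The permutation of `Fin (m + 1)` ending in the value `v` whose first `m` values are in the
same relative order as the values of `σ`. -/
def extendLast (σ : Perm (Fin m)) (v : Fin (m + 1)) : Perm (Fin (m + 1)) :=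
  (finSuccEquiv' (Fin.last m)).trans (σ.optionCongr.trans (finSuccEquiv' v).symm)

@[simp] lemma extendLast_last (σ : Perm (Fin m)) (v : Fin (m + 1)) :
    extendLast σ v (Fin.last m) = v := by
  simp [extendLast, finSuccEquiv'_at]

@[simp] lemma extendLast_castSucc (σ : Perm (Fin m)) (v : Fin (m + 1)) (j : Fin m) :
    extendLast σ v j.castSucc = v.succAbove (σ j) := by
  simp [extendLast, finSuccEquiv'_last_apply_castSucc]

lemma extendLast_bijective :
    Function.Bijective fun p : Perm (Fin m) × Fin (m + 1) => extendLast p.1 p.2 := by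
  rw [Fintype.bijective_iff_injective_and_card]
  refine ⟨?_, by simp [Fintype.card_perm, Nat.factorial_succ, mul_comm]⟩
  rintro ⟨σ, v⟩ ⟨σ', v'⟩ h
  have hv : v = v' := by simpa using congr($h (Fin.last m))
  subst hv
  refine Prod.ext (Equiv.ext fun j => Fin.succAbove_right_injective (p := v) ?_) rfl
  simpa using congr($h j.castSucc)

end Equiv.Perm

open Equiv Equiv.Perm

variable {m : ℕ}

lemma Fin.forall_le_castSucc_iff {j : Fin m} (P : Fin (m + 1) → Prop) :
    (∀ k ≤ j.castSucc, P k) ↔ ∀ k ≤ j, P k.castSucc := by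
  refine ⟨fun h k hk => h _ (Fin.castSucc_le_castSucc_iff.2 hk), fun h k hk => ?_⟩
  have hk' : k ≠ Fin.last m := (hk.trans_lt (Fin.castSucc_lt_last j)).ne
  simpa using h (k.castPred hk') (by rwa [← Fin.castSucc_le_castSucc_iff, Fin.castSucc_castPred])

lemma isLowerRecord_extendLast_castSucc (σ : Perm (Fin m)) (v : Fin (m + 1)) (j : Fin m) :
    isLowerRecord (extendLast σ v) j.castSucc ↔ isLowerRecord σ j := by
  simp [isLowerRecord, Fin.forall_le_castSucc_iff, Fin.succAbove_le_succAbove_iff]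

lemma isUpperRecord_extendLast_castSucc (σ : Perm (Fin m)) (v : Fin (m + 1)) (j : Fin m) :
    isUpperRecord (extendLast σ v) j.castSucc ↔ isUpperRecord σ j := by
  simp [isUpperRecord, Fin.forall_le_castSucc_iff, Fin.succAbove_le_succAbove_iff]

lemma isLowerRecord_extendLast_last (σ : Perm (Fin m)) (v : Fin (m + 1)) :
    isLowerRecord (extendLast σ v) (Fin.last m) ↔ v = 0 := by
  refine ⟨fun h => ?_, fun hv k _ => by simp [hv]⟩
  simpa using h ((extendLast σ v).symm 0) (Fin.le_last _)

lemma isUpperRecord_extendLast_last (σ : Perm (Fin m)) (v : Fin (m + 1)) :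
    isUpperRecord (extendLast σ v) (Fin.last m) ↔ v = Fin.last m := by
  refine ⟨fun h => ?_, fun hv k _ => by simp [hv, Fin.le_last]⟩
  simpa using h ((extendLast σ v).symm (Fin.last m)) (Fin.le_last _)

lemma properLowerCount_extendLast (hm : 0 < m) (σ : Perm (Fin m)) (v : Fin (m + 1)) :
    properLowerCount (extendLast σ v) = properLowerCount σ + if v = 0 then 1 else 0 := by
  rw [properLowerCount, properLowerCount, card_filter, card_filter, Fin.sum_univ_castSucc]
  simp [isLowerRecord_extendLast_castSucc, isLowerRecord_extendLast_last, hm]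

lemma properUpperCount_extendLast (hm : 0 < m) (σ : Perm (Fin m)) (v : Fin (m + 1)) :
    properUpperCount (extendLast σ v) =
      properUpperCount σ + if v = Fin.last m then 1 else 0 := by
  rw [properUpperCount, properUpperCount, card_filter, card_filter, Fin.sum_univ_castSucc]
  simp [isUpperRecord_extendLast_castSucc, isUpperRecord_extendLast_last, hm]

lemma A_succ_eq_sum (hm : 0 < m) (ℓ u : ℕ) :
    A (m + 1) ℓ u = ∑ v : Fin (m + 1), #{σ : Perm (Fin m) |
      properLowerCount σ + (if v = 0 then 1 else 0) = ℓ ∧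
      properUpperCount σ + (if v = Fin.last m then 1 else 0) = u} := by
  rw [A, card_filter, ← (Equiv.ofBijective _ extendLast_bijective).sum_comp,
    Fintype.sum_prod_type_right]
  simp only [ofBijective_apply, properLowerCount_extendLast hm, properUpperCount_extendLast hm,
    card_filter]

lemma card_filter_lower_shift (ℓ u : ℕ) :
    #{σ : Perm (Fin m) | properLowerCount σ + 1 = ℓ ∧ properUpperCount σ = u} =
      if 1 ≤ ℓ then A m (ℓ - 1) u else 0 := by
  split_ifs with hℓ
  · exact congrArg card (filter_congr fun σ _ => by omega)
  · exact card_eq_zero.2 (filter_eq_empty_iff.2 fun σ _ => by omega)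

lemma card_filter_upper_shift (ℓ u : ℕ) :
    #{σ : Perm (Fin m) | properLowerCount σ = ℓ ∧ properUpperCount σ + 1 = u} =
      if 1 ≤ u then A m ℓ (u - 1) else 0 := by
  split_ifs with hu
  · exact congrArg card (filter_congr fun σ _ => by omega)
  · exact card_eq_zero.2 (filter_eq_empty_iff.2 fun σ _ => by omega)

/-- the recursion `A(n,ℓ,u) = A(n−1,ℓ−1,u) + A(n−1,ℓ,u−1) + (n−2)A(n−1,ℓ,u)`,
where terms with a negative argument are taken to be `0`. -/
theorem stmt_0 (n ℓ u : ℕ) (hn : 2 ≤ n) :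
    A n ℓ u = (if 1 ≤ ℓ then A (n - 1) (ℓ - 1) u else 0)
      + (if 1 ≤ u then A (n - 1) ℓ (u - 1) else 0)
      + (n - 2) * A (n - 1) ℓ u := by
  obtain ⟨k, rfl⟩ : ∃ k, n = k + 2 := ⟨n - 2, by omega⟩
  rw [A_succ_eq_sum k.succ_pos, Fin.sum_univ_succ, Fin.sum_univ_castSucc]
  simp only [Nat.succ_eq_add_one, ↓reduceIte, Fin.zero_eq_last_iff, Nat.add_eq_zero_iff,
    one_ne_zero, and_false, add_zero, card_filter_lower_shift, A, Fin.succ_ne_zero,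
    Fin.succ_eq_last_succ, Fin.castSucc_ne_last, sum_const, card_univ, Fintype.card_fin,
    smul_eq_mul, Fin.succ_last, Fin.last_eq_zero_iff, card_filter_upper_shift,
    Nat.add_one_sub_one, add_tsub_cancel_right]
  ring
end

section
/- For every integer n ≥ 2 and all integers ℓ, u ≥ 0 with ℓ + u ≥ 1, A(n,ℓ,u) = C(ℓ+u, ℓ) · B(n−1, ℓ+u−1), where C(·,·) is the binomial coefficient and B(m,k) denotes the number of permutations of {1,…,m} with exactly k proper lower records. -/
open Finset

/-- `B m k` = number of permutations of `{1,…,m}` with exactly `k` proper lower records. -/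
def B (m k : ℕ) : ℕ :=
  (univ.filter fun π : Equiv.Perm (Fin m) => properLowerCount π = k).card

namespace StmtAux

variable {n : ℕ}

/-- Insert a new last entry with value `v` (shifting old values via `succAbove`). -/
def insertLast (σ : Equiv.Perm (Fin n)) (v : Fin (n + 1)) : Equiv.Perm (Fin (n + 1)) :=
  (finSuccEquivLast.trans σ.optionCongr).trans (finSuccEquiv' v).symm

@[simp] lemma insertLast_castSucc (σ : Equiv.Perm (Fin n)) (v : Fin (n + 1)) (j : Fin n) :
    insertLast σ v (Fin.castSucc j) = v.succAbove (σ j) := by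
  simp [insertLast, finSuccEquivLast_castSucc, finSuccEquiv'_symm_some]

@[simp] lemma insertLast_last (σ : Equiv.Perm (Fin n)) (v : Fin (n + 1)) :
    insertLast σ v (Fin.last n) = v := by
  simp [insertLast, finSuccEquivLast_last, finSuccEquiv'_symm_none]

/-- Remove the last entry and reduce the remaining values. -/
def dropLast (π : Equiv.Perm (Fin (n + 1))) : Equiv.Perm (Fin n) :=
  Equiv.removeNone ((finSuccEquivLast.symm.trans π).trans (finSuccEquiv' (π (Fin.last n))))

lemma succAbove_dropLast (π : Equiv.Perm (Fin (n + 1))) (j : Fin n) :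
    (π (Fin.last n)).succAbove (dropLast π j) = π (Fin.castSucc j) := by
  have hne : π (Fin.castSucc j) ≠ π (Fin.last n) :=
    fun h => absurd (π.injective h) (Fin.ne_of_lt (Fin.castSucc_lt_last j))
  obtain ⟨i, hi⟩ := Fin.exists_succAbove_eq hne
  have h : ((finSuccEquivLast.symm.trans π).trans (finSuccEquiv' (π (Fin.last n))))
      (some j) = some i := by
    simp [finSuccEquivLast_symm_some, ← hi]
  have h2 := Equiv.removeNone_some _ ⟨i, h⟩
  rw [h] at h2
  have : dropLast π j = i := Option.some_injective _ h2
  rw [this, hi]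

lemma dropLast_le_iff (π : Equiv.Perm (Fin (n + 1))) (j k : Fin n) :
    dropLast π j ≤ dropLast π k ↔ π (Fin.castSucc j) ≤ π (Fin.castSucc k) := by
  rw [← succAbove_dropLast π j, ← succAbove_dropLast π k, Fin.succAbove_le_succAbove_iff]

lemma dropLast_insertLast (σ : Equiv.Perm (Fin n)) (v : Fin (n + 1)) :
    dropLast (insertLast σ v) = σ := by
  apply Equiv.ext
  intro j
  have := succAbove_dropLast (insertLast σ v) j
  rw [insertLast_last, insertLast_castSucc] at this
  exact Fin.succAbove_right_injective this

lemma insertLast_dropLast (π : Equiv.Perm (Fin (n + 1))) :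
    insertLast (dropLast π) (π (Fin.last n)) = π := by
  apply Equiv.ext
  intro x
  rcases Fin.eq_castSucc_or_eq_last x with ⟨j, rfl⟩ | rfl
  · rw [insertLast_castSucc, succAbove_dropLast]
  · rw [insertLast_last]

/-- The decomposition equivalence. -/
def E (n : ℕ) : Equiv.Perm (Fin n) × Fin (n + 1) ≃ Equiv.Perm (Fin (n + 1)) where
  toFun p := insertLast p.1 p.2
  invFun π := (dropLast π, π (Fin.last n))
  left_inv p := by
    obtain ⟨σ, v⟩ := p
    simp [dropLast_insertLast]
  right_inv π := insertLast_dropLast π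

lemma isLowerRecord_castSucc (π : Equiv.Perm (Fin (n + 1))) (j : Fin n) :
    isLowerRecord π (Fin.castSucc j) ↔ isLowerRecord (dropLast π) j := by
  constructor
  · intro h k hk
    rw [dropLast_le_iff]
    exact h (Fin.castSucc k) (Fin.castSucc_le_castSucc_iff.2 hk)
  · intro h k hk
    rcases Fin.eq_castSucc_or_eq_last k with ⟨k', rfl⟩ | rfl
    · rw [← dropLast_le_iff]
      exact h k' (Fin.castSucc_le_castSucc_iff.1 hk)
    · exact absurd (lt_of_lt_of_le (Fin.castSucc_lt_last j) hk) (lt_irrefl _)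
  
lemma isUpperRecord_castSucc (π : Equiv.Perm (Fin (n + 1))) (j : Fin n) :
    isUpperRecord π (Fin.castSucc j) ↔ isUpperRecord (dropLast π) j := by
  constructor
  · intro h k hk
    rw [dropLast_le_iff]
    exact h (Fin.castSucc k) (Fin.castSucc_le_castSucc_iff.2 hk)
  · intro h k hk
    rcases Fin.eq_castSucc_or_eq_last k with ⟨k', rfl⟩ | rfl
    · rw [← dropLast_le_iff]
      exact h k' (Fin.castSucc_le_castSucc_iff.1 hk)
    · exact absurd (lt_of_lt_of_le (Fin.castSucc_lt_last j) hk) (lt_irrefl _)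

lemma isLowerRecord_last (π : Equiv.Perm (Fin (n + 1))) :
    isLowerRecord π (Fin.last n) ↔ π (Fin.last n) = 0 := by
  constructor
  · intro h
    have := h (π.symm 0) (Fin.le_last _)
    rw [Equiv.apply_symm_apply] at this
    exact Fin.le_zero_iff.1 this
  · intro h k _
    rw [h]
    exact Fin.zero_le _

lemma isUpperRecord_last (π : Equiv.Perm (Fin (n + 1))) :
    isUpperRecord π (Fin.last n) ↔ π (Fin.last n) = Fin.last n := by
  constructor
  · intro h
    have := h (π.symm (Fin.last n)) (Fin.le_last _)
    rw [Equiv.apply_symm_apply] at this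
    exact Fin.last_le_iff.1 this
  · intro h k _
    rw [h]
    exact Fin.le_last _

lemma plc_eq (π : Equiv.Perm (Fin (n + 2))) :
    properLowerCount π =
      properLowerCount (dropLast π) + if π (Fin.last (n + 1)) = 0 then 1 else 0 := by
  unfold properLowerCount
  rw [Finset.card_filter, Finset.card_filter, Fin.sum_univ_castSucc]
  congr 1
  · apply Finset.sum_congr rfl
    intro j _
    simp [isLowerRecord_castSucc]
  · simp [isLowerRecord_last]

lemma puc_eq (π : Equiv.Perm (Fin (n + 2))) :
    properUpperCount π =
      properUpperCount (dropLast π) + if π (Fin.last (n + 1)) = Fin.last (n + 1) then 1 else 0 := by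
  unfold properUpperCount
  rw [Finset.card_filter, Finset.card_filter, Fin.sum_univ_castSucc]
  congr 1
  · apply Finset.sum_congr rfl
    intro j _
    simp [isUpperRecord_castSucc]
  · simp [isUpperRecord_last]

lemma plc_insertLast (σ : Equiv.Perm (Fin (n + 1))) (v : Fin (n + 2)) :
    properLowerCount (insertLast σ v) = properLowerCount σ + if v = 0 then 1 else 0 := by
  rw [plc_eq, dropLast_insertLast, insertLast_last]

lemma puc_insertLast (σ : Equiv.Perm (Fin (n + 1))) (v : Fin (n + 2)) :
    properUpperCount (insertLast σ v) =
      properUpperCount σ + if v = Fin.last (n + 1) then 1 else 0 := by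
  rw [puc_eq, dropLast_insertLast, insertLast_last]

end StmtAux

namespace StmtAux

lemma E_apply {n : ℕ} (σ : Equiv.Perm (Fin n)) (v : Fin (n + 1)) :
    E n (σ, v) = insertLast σ v := rfl

lemma last_ne_zero' (n : ℕ) : (Fin.last (n + 1) : Fin (n + 2)) ≠ 0 := by
  simp [Fin.ext_iff]

set_option maxHeartbeats 2000000 in
lemma recA (n ℓ u : ℕ) :
    A (n + 2) ℓ u = (if 1 ≤ ℓ then A (n + 1) (ℓ - 1) u else 0) +
      (if 1 ≤ u then A (n + 1) ℓ (u - 1) else 0) + n * A (n + 1) ℓ u := by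
  classical
  set P : Equiv.Perm (Fin (n + 2)) → Prop := fun π =>
    properLowerCount π = ℓ ∧ properUpperCount π = u with hP
  set f : Fin (n + 2) → ℕ := fun v =>
    (univ.filter fun σ : Equiv.Perm (Fin (n + 1)) => P (E (n + 1) (σ, v))).card with hf
  have hfv : ∀ v, f v = (univ.filter fun σ : Equiv.Perm (Fin (n + 1)) =>
      properLowerCount σ + (if v = 0 then 1 else 0) = ℓ ∧
      properUpperCount σ + (if v = Fin.last (n + 1) then 1 else 0) = u).card := by
    intro v
    simp only [hf, hP]
    refine congrArg Finset.card (Finset.filter_congr fun σ _ => ?_)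
    rw [E_apply, plc_insertLast, puc_insertLast]
  have hsum : A (n + 2) ℓ u = ∑ v : Fin (n + 2), f v := by
    have h1 : A (n + 2) ℓ u = Fintype.card {π : Equiv.Perm (Fin (n + 2)) // P π} := by
      rw [Fintype.card_subtype]; rfl
    have h2 : Fintype.card {π : Equiv.Perm (Fin (n + 2)) // P π} =
        Fintype.card {p : Equiv.Perm (Fin (n + 1)) × Fin (n + 2) // P (E (n + 1) p)} :=
      (Fintype.card_congr ((E (n + 1)).subtypeEquiv fun p => Iff.rfl)).symm
    have h3 : Fintype.card {p : Equiv.Perm (Fin (n + 1)) × Fin (n + 2) // P (E (n + 1) p)} =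
        (univ.filter fun p : Equiv.Perm (Fin (n + 1)) × Fin (n + 2) => P (E (n + 1) p)).card :=
      Fintype.card_subtype _
    have h4 : (univ.filter fun p : Equiv.Perm (Fin (n + 1)) × Fin (n + 2) =>
        P (E (n + 1) p)).card = ∑ v : Fin (n + 2), f v := by
      rw [Finset.card_filter, ← Finset.univ_product_univ, Finset.sum_product_right]
      exact Finset.sum_congr rfl fun v _ => (Finset.card_filter _ _).symm
    rw [h1, h2, h3, h4]
  have hf0 : f 0 = if 1 ≤ ℓ then A (n + 1) (ℓ - 1) u else 0 := by
    rw [hfv]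
    rcases ℓ with _ | m
    · rw [if_neg (show ¬(1 : ℕ) ≤ 0 by omega), Finset.card_eq_zero,
        Finset.filter_eq_empty_iff]
      intro σ _ hcon
      have h1 := hcon.1
      rw [if_pos rfl] at h1
      omega
    · rw [if_pos (show 1 ≤ m + 1 by omega), Nat.succ_sub_one]
      unfold A
      refine congrArg Finset.card (Finset.filter_congr fun σ _ => ?_)
      rw [if_pos rfl, if_neg (Ne.symm (last_ne_zero' n))]
      omega
  have hfl : f (Fin.last (n + 1)) = if 1 ≤ u then A (n + 1) ℓ (u - 1) else 0 := by
    rw [hfv]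
    rcases u with _ | m
    · rw [if_neg (show ¬(1 : ℕ) ≤ 0 by omega), Finset.card_eq_zero,
        Finset.filter_eq_empty_iff]
      intro σ _ hcon
      have h2 := hcon.2
      rw [if_pos rfl] at h2
      omega
    · rw [if_pos (show 1 ≤ m + 1 by omega), Nat.succ_sub_one]
      unfold A
      refine congrArg Finset.card (Finset.filter_congr fun σ _ => ?_)
      rw [if_pos rfl, if_neg (last_ne_zero' n)]
      omega
  have hfother : ∀ v : Fin (n + 2), v ≠ 0 → v ≠ Fin.last (n + 1) → f v = A (n + 1) ℓ u := by
    intro v h0 hl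
    rw [hfv]
    unfold A
    refine congrArg Finset.card (Finset.filter_congr fun σ _ => ?_)
    rw [if_neg h0, if_neg hl, add_zero, add_zero]
  have hmem : Fin.last (n + 1) ∈ (univ : Finset (Fin (n + 2))).erase 0 :=
    Finset.mem_erase.2 ⟨last_ne_zero' n, Finset.mem_univ _⟩
  rw [hsum, ← Finset.add_sum_erase _ f (Finset.mem_univ 0),
    ← Finset.add_sum_erase _ f hmem]
  have hconst : ∑ v ∈ ((univ : Finset (Fin (n + 2))).erase 0).erase (Fin.last (n + 1)), f v =
      n * A (n + 1) ℓ u := by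
    have hc : ∑ v ∈ ((univ : Finset (Fin (n + 2))).erase 0).erase (Fin.last (n + 1)), f v =
        ∑ _v ∈ ((univ : Finset (Fin (n + 2))).erase 0).erase (Fin.last (n + 1)),
          A (n + 1) ℓ u :=
      Finset.sum_congr rfl (fun v hv => by
        simp only [Finset.mem_erase] at hv
        exact hfother v hv.2.1 hv.1)
    rw [hc, Finset.sum_const, smul_eq_mul]
    congr 1
    rw [Finset.card_erase_of_mem hmem, Finset.card_erase_of_mem (Finset.mem_univ _),
      Finset.card_univ, Fintype.card_fin]
    omega
  rw [hconst, hf0, hfl, add_assoc]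

set_option maxHeartbeats 2000000 in
lemma recB (n k : ℕ) :
    B (n + 2) k = (if 1 ≤ k then B (n + 1) (k - 1) else 0) + (n + 1) * B (n + 1) k := by
  classical
  set P : Equiv.Perm (Fin (n + 2)) → Prop := fun π => properLowerCount π = k with hP
  set f : Fin (n + 2) → ℕ := fun v =>
    (univ.filter fun σ : Equiv.Perm (Fin (n + 1)) => P (E (n + 1) (σ, v))).card with hf
  have hfv : ∀ v, f v = (univ.filter fun σ : Equiv.Perm (Fin (n + 1)) =>
      properLowerCount σ + (if v = 0 then 1 else 0) = k).card := by
    intro v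
    simp only [hf, hP]
    refine congrArg Finset.card (Finset.filter_congr fun σ _ => ?_)
    rw [E_apply, plc_insertLast]
  have hsum : B (n + 2) k = ∑ v : Fin (n + 2), f v := by
    have h1 : B (n + 2) k = Fintype.card {π : Equiv.Perm (Fin (n + 2)) // P π} := by
      rw [Fintype.card_subtype]; rfl
    have h2 : Fintype.card {π : Equiv.Perm (Fin (n + 2)) // P π} =
        Fintype.card {p : Equiv.Perm (Fin (n + 1)) × Fin (n + 2) // P (E (n + 1) p)} :=
      (Fintype.card_congr ((E (n + 1)).subtypeEquiv fun p => Iff.rfl)).symm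
    have h3 : Fintype.card {p : Equiv.Perm (Fin (n + 1)) × Fin (n + 2) // P (E (n + 1) p)} =
        (univ.filter fun p : Equiv.Perm (Fin (n + 1)) × Fin (n + 2) => P (E (n + 1) p)).card :=
      Fintype.card_subtype _
    have h4 : (univ.filter fun p : Equiv.Perm (Fin (n + 1)) × Fin (n + 2) =>
        P (E (n + 1) p)).card = ∑ v : Fin (n + 2), f v := by
      rw [Finset.card_filter, ← Finset.univ_product_univ, Finset.sum_product_right]
      exact Finset.sum_congr rfl fun v _ => (Finset.card_filter _ _).symm
    rw [h1, h2, h3, h4]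
  have hf0 : f 0 = if 1 ≤ k then B (n + 1) (k - 1) else 0 := by
    rw [hfv]
    rcases k with _ | m
    · rw [if_neg (show ¬(1 : ℕ) ≤ 0 by omega), Finset.card_eq_zero,
        Finset.filter_eq_empty_iff]
      intro σ _ hcon
      rw [if_pos rfl] at hcon
      omega
    · rw [if_pos (show 1 ≤ m + 1 by omega), Nat.succ_sub_one]
      unfold B
      refine congrArg Finset.card (Finset.filter_congr fun σ _ => ?_)
      rw [if_pos rfl]
      omega
  have hfother : ∀ v : Fin (n + 2), v ≠ 0 → f v = B (n + 1) k := by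
    intro v h0
    rw [hfv]
    unfold B
    refine congrArg Finset.card (Finset.filter_congr fun σ _ => ?_)
    rw [if_neg h0, add_zero]
  rw [hsum, ← Finset.add_sum_erase _ f (Finset.mem_univ 0)]
  have hconst : ∑ v ∈ (univ : Finset (Fin (n + 2))).erase 0, f v = (n + 1) * B (n + 1) k := by
    have hc : ∑ v ∈ (univ : Finset (Fin (n + 2))).erase 0, f v =
        ∑ _v ∈ (univ : Finset (Fin (n + 2))).erase 0, B (n + 1) k :=
      Finset.sum_congr rfl (fun v hv => hfother v (Finset.mem_erase.1 hv).1)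
    rw [hc, Finset.sum_const, smul_eq_mul]
    congr 1
    rw [Finset.card_erase_of_mem (Finset.mem_univ _), Finset.card_univ, Fintype.card_fin]
    omega
  rw [hconst, hf0]

end StmtAux

namespace StmtAux

lemma A_one (a b : ℕ) : A 1 a b = if a = 0 ∧ b = 0 then 1 else 0 := by
  have h : ∀ π : Equiv.Perm (Fin 1), properLowerCount π = 0 ∧ properUpperCount π = 0 := by
    decide
  unfold A
  by_cases hab : a = 0 ∧ b = 0
  · rw [if_pos hab]
    obtain ⟨rfl, rfl⟩ := hab
    rw [Finset.filter_true_of_mem fun π _ => h π, Finset.card_univ]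
    simp [Fintype.card_perm]
  · rw [if_neg hab, Finset.card_eq_zero, Finset.filter_eq_empty_iff]
    intro π _ hcon
    obtain ⟨h1, h2⟩ := hcon
    rw [(h π).1] at h1
    rw [(h π).2] at h2
    exact hab ⟨h1.symm, h2.symm⟩

lemma B_one (k : ℕ) : B 1 k = if k = 0 then 1 else 0 := by
  have h : ∀ π : Equiv.Perm (Fin 1), properLowerCount π = 0 := by decide
  unfold B
  by_cases hk : k = 0
  · rw [if_pos hk]
    subst hk
    rw [Finset.filter_true_of_mem fun π _ => h π, Finset.card_univ]
    simp [Fintype.card_perm]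
  · rw [if_neg hk, Finset.card_eq_zero, Finset.filter_eq_empty_iff]
    intro π _ hcon
    rw [h π] at hcon
    exact hk hcon.symm

lemma A_zz (n : ℕ) : A (n + 2) 0 0 = 0 := by
  unfold A
  rw [Finset.card_eq_zero, Finset.filter_eq_empty_iff]
  intro π _ hcon
  obtain ⟨hl, hu⟩ := hcon
  have hLow : ¬ isLowerRecord π ⟨1, by omega⟩ := by
    intro hrec
    have h0 := Finset.card_eq_zero.1 hl
    rw [Finset.eq_empty_iff_forall_notMem] at h0
    exact h0 ⟨1, by omega⟩
      (Finset.mem_filter.2 ⟨Finset.mem_univ _, Nat.one_pos, hrec⟩)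
  have hUp : ¬ isUpperRecord π ⟨1, by omega⟩ := by
    intro hrec
    have h0 := Finset.card_eq_zero.1 hu
    rw [Finset.eq_empty_iff_forall_notMem] at h0
    exact h0 ⟨1, by omega⟩
      (Finset.mem_filter.2 ⟨Finset.mem_univ _, Nat.one_pos, hrec⟩)
  rcases le_total (π ⟨1, by omega⟩) (π ⟨0, by omega⟩) with hle | hle
  · apply hLow
    intro k hk
    have hk' : k.val ≤ 1 := hk
    have hv : k.val = 0 ∨ k.val = 1 := by omega
    rcases hv with hv | hv
    · have : k = ⟨0, by omega⟩ := Fin.ext hv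
      rw [this]
      exact hle
    · have : k = ⟨1, by omega⟩ := Fin.ext hv
      rw [this]
  · apply hUp
    intro k hk
    have hk' : k.val ≤ 1 := hk
    have hv : k.val = 0 ∨ k.val = 1 := by omega
    rcases hv with hv | hv
    · have : k = ⟨0, by omega⟩ := Fin.ext hv
      rw [this]
      exact hle
    · have : k = ⟨1, by omega⟩ := Fin.ext hv
      rw [this]

lemma key (m : ℕ) : ∀ ℓ u : ℕ, 1 ≤ ℓ + u →
    A (m + 2) ℓ u = Nat.choose (ℓ + u) ℓ * B (m + 1) (ℓ + u - 1) := by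
  induction m with
  | zero =>
    intro ℓ u hlu
    rw [recA 0]
    rcases ℓ with _ | a <;> rcases u with _ | b
    · omega
    · rw [if_neg (by omega), if_pos (by omega)]
      simp [A_one, B_one]
    · rw [if_pos (by omega), if_neg (by omega)]
      simp [A_one, B_one]
    · rw [if_pos (by omega), if_pos (by omega)]
      simp [A_one, B_one]
  | succ m ih =>
    intro ℓ u hlu
    rw [recA (m + 1)]
    rcases ℓ with _ | a <;> rcases u with _ | b
    · omega
    · rw [if_neg (by omega), if_pos (by omega)]
      rcases b with _ | c
      · rw [show (1 : ℕ) - 1 = 0 from rfl, A_zz, ih 0 1 (by omega), recB m 0]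
        rw [if_neg (by omega)]
        simp [Nat.choose]
      · rw [show (c + 2 : ℕ) - 1 = c + 1 from rfl,
          ih 0 (c + 1) (by omega), ih 0 (c + 2) (by omega)]
        rw [show (0 : ℕ) + (c + 2) - 1 = c + 1 from by omega, recB m (c + 1)]
        rw [if_pos (by omega)]
        simp only [Nat.zero_add, Nat.choose_zero_right, one_mul, Nat.add_sub_cancel,
          Nat.succ_sub_one]
    · rw [if_pos (by omega), if_neg (by omega)]
      rcases a with _ | c
      · rw [show (1 : ℕ) - 1 = 0 from rfl, A_zz, ih 1 0 (by omega), recB m 0]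
        rw [if_neg (by omega)]
        simp [Nat.choose]
      · rw [show (c + 2 : ℕ) - 1 = c + 1 from rfl,
          ih (c + 1) 0 (by omega), ih (c + 2) 0 (by omega)]
        rw [show (c + 2 : ℕ) + 0 - 1 = c + 1 from by omega, recB m (c + 1)]
        rw [if_pos (by omega)]
        simp only [Nat.add_zero, Nat.choose_self, one_mul, Nat.add_sub_cancel,
          Nat.succ_sub_one]
    · rw [if_pos (by omega), if_pos (by omega)]
      have e1 : a + 1 - 1 = a := by omega
      have e2 : b + 1 - 1 = b := by omega
      rw [e1, e2, ih a (b + 1) (by omega), ih (a + 1) b (by omega),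
        ih (a + 1) (b + 1) (by omega)]
      have e3 : a + (b + 1) - 1 = a + b := by omega
      have e4 : a + 1 + b - 1 = a + b := by omega
      have e5 : a + 1 + (b + 1) - 1 = a + b + 1 := by omega
      rw [e3, e4, e5]
      have e6 : a + (b + 1) = a + b + 1 := by omega
      have e7 : a + 1 + b = a + b + 1 := by omega
      have e8 : a + 1 + (b + 1) = a + b + 2 := by omega
      rw [e6, e7, e8, recB m (a + b + 1), if_pos (by omega),
        show a + b + 1 - 1 = a + b from by omega]
      have hch : (a + b + 2).choose (a + 1) =
          (a + b + 1).choose a + (a + b + 1).choose (a + 1) :=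
        Nat.choose_succ_succ (a + b + 1) a
      rw [hch]
      ring

end StmtAux

/-- `A(n,ℓ,u) = C(ℓ+u,ℓ) ⬝ B(n−1, ℓ+u−1)`. -/
theorem stmt_2 (n ℓ u : ℕ) (hn : 2 ≤ n) (hlu : 1 ≤ ℓ + u) :
    A n ℓ u = Nat.choose (ℓ + u) ℓ * B (n - 1) (ℓ + u - 1) := by
  obtain ⟨m, rfl⟩ : ∃ m, n = m + 2 := ⟨n - 2, by omega⟩
  rw [show m + 2 - 1 = m + 1 from rfl]
  exact StmtAux.key m ℓ u hlu
end

section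
/- For every integer n ≥ 1, every subset T ⊆ {2,…,n}, and any two subsets A, B ⊆ T with |A| = |B|, the number of permutations π of {1,…,n} whose set of positions of proper lower records equals A and whose set of positions of proper upper records equals T∖A is equal to the number of permutations π of {1,…,n} whose set of positions of proper lower records equals B and whose set of positions of proper upper records equals T∖B. (Equivalently: under the uniform distribution on S_n, conditionally on the record counts and on the set of positions occupied by the ℓ+u proper records, all C(ℓ+u, ℓ) allocations of the ℓ lower records among these positions are equally likely.) -/
open Finset

/-- the set of positions (indices `≥ 1`, i.e. positions `≥ 2`) of proper lower records -/
def properLowerRecSet {n : ℕ} (π : Equiv.Perm (Fin n)) : Finset (Fin n) :=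
  univ.filter fun j : Fin n => 0 < j.val ∧ isLowerRecord π j

/-- the set of positions (indices `≥ 1`, i.e. positions `≥ 2`) of proper upper records -/
def properUpperRecSet {n : ℕ} (π : Equiv.Perm (Fin n)) : Finset (Fin n) :=
  univ.filter fun j : Fin n => 0 < j.val ∧ isUpperRecord π j

/-!
Record positions are read off the Lehmer code `c j = #{k < j | π k < π j} ∈ {0, …, j}`, which is
a bijection from permutations of `Fin n` onto `∏ j, Fin (j + 1)`: position `j` is a lower record
iff `c j = 0` and an upper record iff `c j = j`, and for `j ≥ 1` these two values differ. Hence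
the two families correspond, through their codes, under the map that overwrites `c` on `T` by `0`
on `B` and by `j` on `T \ B`; its inverse overwrites in the same way with `A`.
-/

theorem Finset.strictMonoOn_card_filter_lt {α : Type*} [LinearOrder α] (C : Finset α) :
    StrictMonoOn (fun x => #{v ∈ C | v < x}) C := by
  intro x hx y _ hxy
  refine card_lt_card ((ssubset_iff_of_subset fun v hv => ?_).2 ⟨x, ?_, ?_⟩)
  · rw [mem_filter] at hv ⊢
    exact ⟨hv.1, hv.2.trans hxy⟩
  · exact mem_filter.2 ⟨hx, hxy⟩
  · simp

namespace Equiv.Perm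

variable {n : ℕ}

def smallerBefore (π : Perm (Fin n)) (j : Fin n) : ℕ :=
  #{k ∈ Iio j | π k < π j}

theorem smallerBefore_le (π : Perm (Fin n)) (j : Fin n) : π.smallerBefore j ≤ j := by
  simpa [smallerBefore] using card_filter_le (Iio j) fun k => π k < π j

theorem isLowerRecord_iff_smallerBefore_eq_zero (π : Perm (Fin n)) (j : Fin n) :
    isLowerRecord π j ↔ π.smallerBefore j = 0 := by
  rw [smallerBefore, card_filter_eq_zero_iff, isLowerRecord]
  refine ⟨fun h k hk => not_lt.2 (h k (mem_Iio.1 hk).le), fun h k hk => ?_⟩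
  rcases hk.lt_or_eq with hk | rfl
  · exact not_lt.1 (h k (mem_Iio.2 hk))
  · exact le_rfl

theorem isUpperRecord_iff_smallerBefore_eq (π : Perm (Fin n)) (j : Fin n) :
    isUpperRecord π j ↔ π.smallerBefore j = j := by
  conv_rhs => rw [← Fin.card_Iio j, smallerBefore, card_filter_eq_iff]
  refine ⟨fun h k hk => (h k (mem_Iio.1 hk).le).lt_of_ne
    (π.injective.ne (mem_Iio.1 hk).ne), fun h k hk => ?_⟩
  rcases hk.lt_or_eq with hk | rfl
  · exact (h k (mem_Iio.2 hk)).le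
  · exact le_rfl

theorem smallerBefore_eq_card_filter_image (π : Perm (Fin n)) (j : Fin n) :
    π.smallerBefore j = #{v ∈ (Iic j).image π | v < π j} := by
  rw [smallerBefore, filter_image, card_image_of_injective _ π.injective, ← Iio_insert,
    filter_insert, if_neg (lt_irrefl _)]

theorem image_Iic_eq_compl (π : Perm (Fin n)) (j : Fin n) :
    (Iic j).image π = ((Ioi j).image π)ᶜ := by
  ext v
  obtain ⟨k, rfl⟩ := π.surjective v
  simp [π.injective.eq_iff]

def lehmerCode (π : Perm (Fin n)) (j : Fin n) : Fin (j.val + 1) :=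
  ⟨π.smallerBefore j, Nat.lt_succ_of_le (π.smallerBefore_le j)⟩

theorem lehmerCode_injective : Function.Injective (lehmerCode (n := n)) := by
  intro π σ h
  refine Equiv.ext fun j => ?_
  -- Once `π` and `σ` agree after `j`, they take the same set of values up to `j`,
  -- in which `π j` and `σ j` have the same rank.
  induction j using WellFoundedGT.induction with
  | _ j ih =>
    have hC : (Iic j).image π = (Iic j).image σ := by
      rw [image_Iic_eq_compl, image_Iic_eq_compl, image_congr fun k hk => ih k (mem_Ioi.1 hk)]
    have hrank : π.smallerBefore j = σ.smallerBefore j := congrArg Fin.val (congrFun h j)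
    rw [smallerBefore_eq_card_filter_image, smallerBefore_eq_card_filter_image, hC] at hrank
    exact (strictMonoOn_card_filter_lt _).injOn (hC ▸ mem_image_of_mem π (mem_Iic.2 le_rfl))
      (mem_image_of_mem σ (mem_Iic.2 le_rfl)) hrank

theorem card_perm_eq_card_lehmerCodes :
    Fintype.card (Perm (Fin n)) = Fintype.card (∀ j : Fin n, Fin (j.val + 1)) := by
  simp only [Fintype.card_perm, Fintype.card_pi, Fintype.card_fin]
  rw [Fin.prod_univ_eq_prod_range (· + 1), prod_range_add_one_eq_factorial]

noncomputable def lehmerEquiv : Perm (Fin n) ≃ ∀ j : Fin n, Fin (j.val + 1) :=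
  .ofBijective lehmerCode <| (Fintype.bijective_iff_injective_and_card _).2
    ⟨lehmerCode_injective, card_perm_eq_card_lehmerCodes⟩

end Equiv.Perm

section PinEnds

variable {ι : Type*} {m : ι → ℕ} {T S S' : Finset ι} {c : ∀ i, Fin (m i + 1)} {i : ι}

section

variable [Fintype ι]

def zeroCoords (c : ∀ i, Fin (m i + 1)) : Finset ι :=
  {i | 0 < m i ∧ c i = 0}

def lastCoords (c : ∀ i, Fin (m i + 1)) : Finset ι :=
  {i | 0 < m i ∧ c i = Fin.last (m i)}

theorem mem_zeroCoords : i ∈ zeroCoords c ↔ 0 < m i ∧ c i = 0 := by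
  simp [zeroCoords]

theorem mem_lastCoords : i ∈ lastCoords c ↔ 0 < m i ∧ c i = Fin.last (m i) := by
  simp [lastCoords]

end

variable [DecidableEq ι]

def pinEnds (T S : Finset ι) (c : ∀ i, Fin (m i + 1)) (i : ι) : Fin (m i + 1) :=
  if i ∈ S then 0 else if i ∈ T then Fin.last (m i) else c i

theorem pinEnds_pinEnds (hS' : S' ⊆ T) : pinEnds T S (pinEnds T S' c) = pinEnds T S c := by
  funext i
  by_cases hiT : i ∈ T
  · simp [pinEnds, hiT]
  · simp [pinEnds, hiT, mt (@hS' i) hiT]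

variable [Fintype ι]

theorem pinEnds_eq_self (h0 : zeroCoords c = S) (hl : lastCoords c = T \ S) :
    pinEnds T S c = c := by
  funext i
  by_cases hiS : i ∈ S
  · simp [pinEnds, hiS, (mem_zeroCoords.1 (h0 ▸ hiS)).2]
  · by_cases hiT : i ∈ T
    · simp [pinEnds, hiS, hiT, (mem_lastCoords.1 (hl ▸ mem_sdiff.2 ⟨hiT, hiS⟩)).2]
    · simp [pinEnds, hiS, hiT]

theorem zeroCoords_pinEnds (hT : ∀ i ∈ T, 0 < m i) (hS : S ⊆ T) (hc : zeroCoords c ⊆ T) :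
    zeroCoords (pinEnds T S c) = S := by
  ext i
  by_cases hiS : i ∈ S
  · simp [mem_zeroCoords, pinEnds, hiS, hT i (hS hiS)]
  · by_cases hiT : i ∈ T
    · simp [mem_zeroCoords, pinEnds, hiS, hiT, Fin.ext_iff, (hT i hiT).ne']
    · simpa [mem_zeroCoords, pinEnds, hiS, hiT] using mt (@hc i) hiT

theorem lastCoords_pinEnds (hT : ∀ i ∈ T, 0 < m i) (hc : lastCoords c ⊆ T) :
    lastCoords (pinEnds T S c) = T \ S := by
  ext i
  by_cases hiS : i ∈ S
  · simp [mem_lastCoords, pinEnds, hiS, Fin.ext_iff, eq_comm (a := 0), Nat.pos_iff_ne_zero]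
  · by_cases hiT : i ∈ T
    · simp [mem_lastCoords, pinEnds, hiS, hiT, hT]
    · simpa [mem_lastCoords, pinEnds, hiS, hiT] using mt (@hc i) hiT

theorem card_filter_zeroCoords_lastCoords_eq (hT : ∀ i ∈ T, 0 < m i) {A B : Finset ι}
    (hA : A ⊆ T) (hB : B ⊆ T) :
    #{c : ∀ i, Fin (m i + 1) | zeroCoords c = A ∧ lastCoords c = T \ A}
      = #{c : ∀ i, Fin (m i + 1) | zeroCoords c = B ∧ lastCoords c = T \ B} := by
  refine card_nbij' (pinEnds T B) (pinEnds T A) (fun c hc => ?_) (fun c hc => ?_)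
    (fun c hc => ?_) (fun c hc => ?_)
  all_goals simp only [mem_coe, mem_filter, mem_univ, true_and] at hc ⊢
  · exact ⟨zeroCoords_pinEnds hT hB (hc.1 ▸ hA), lastCoords_pinEnds hT (hc.2 ▸ sdiff_subset)⟩
  · exact ⟨zeroCoords_pinEnds hT hA (hc.1 ▸ hB), lastCoords_pinEnds hT (hc.2 ▸ sdiff_subset)⟩
  · rw [pinEnds_pinEnds hB, pinEnds_eq_self hc.1 hc.2]
  · rw [pinEnds_pinEnds hA, pinEnds_eq_self hc.1 hc.2]

end PinEnds

theorem properLowerRecSet_eq_zeroCoords {n : ℕ} (π : Equiv.Perm (Fin n)) :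
    properLowerRecSet π = zeroCoords (Equiv.Perm.lehmerEquiv π) := by
  ext j
  simp [properLowerRecSet, zeroCoords, Equiv.Perm.lehmerEquiv, Equiv.Perm.lehmerCode,
    Fin.ext_iff, Equiv.Perm.isLowerRecord_iff_smallerBefore_eq_zero]

theorem properUpperRecSet_eq_lastCoords {n : ℕ} (π : Equiv.Perm (Fin n)) :
    properUpperRecSet π = lastCoords (Equiv.Perm.lehmerEquiv π) := by
  ext j
  simp [properUpperRecSet, lastCoords, Equiv.Perm.lehmerEquiv, Equiv.Perm.lehmerCode,
    Fin.ext_iff, Equiv.Perm.isUpperRecord_iff_smallerBefore_eq]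

theorem card_filter_properRecSets_eq {n : ℕ} (L U : Finset (Fin n)) :
    #{π : Equiv.Perm (Fin n) | properLowerRecSet π = L ∧ properUpperRecSet π = U}
      = #{c : ∀ j : Fin n, Fin (j.val + 1) | zeroCoords c = L ∧ lastCoords c = U} :=
  card_equiv Equiv.Perm.lehmerEquiv fun π => by
    simp [properLowerRecSet_eq_zeroCoords, properUpperRecSet_eq_lastCoords]

theorem stmt_4_general (n : ℕ) (T A B : Finset (Fin n))
    (hT : ∀ j ∈ T, 0 < j.val) (hA : A ⊆ T) (hB : B ⊆ T) :
    (univ.filter fun π : Equiv.Perm (Fin n) =>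
        properLowerRecSet π = A ∧ properUpperRecSet π = T \ A).card
      = (univ.filter fun π : Equiv.Perm (Fin n) =>
        properLowerRecSet π = B ∧ properUpperRecSet π = T \ B).card := by
  rw [card_filter_properRecSets_eq, card_filter_properRecSets_eq]
  exact card_filter_zeroCoords_lastCoords_eq hT hA hB

/-- given a set `T` of proper positions and `A, B ⊆ T` with `|A| = |B|`,
as many permutations have proper lower record set `A` and proper upper record set `T \ A`
as have proper lower record set `B` and proper upper record set `T \ B`. -/
theorem stmt_4 (n : ℕ) (hn : 1 ≤ n) (T A B : Finset (Fin n))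
    (hT : ∀ j ∈ T, 0 < j.val) (hA : A ⊆ T) (hB : B ⊆ T) (hAB : A.card = B.card) :
    (univ.filter fun π : Equiv.Perm (Fin n) =>
        properLowerRecSet π = A ∧ properUpperRecSet π = T \ A).card
      = (univ.filter fun π : Equiv.Perm (Fin n) =>
        properLowerRecSet π = B ∧ properUpperRecSet π = T \ B).card :=
  stmt_4_general n T A B hT hA hB
end

section
/- Let n ≥ 1 and ℓ, u ≥ 0 be integers, and let 1 = r_{−ℓ} < r_{−ℓ+1} < ⋯ < r_0 < ⋯ < r_{u−1} < r_u = n be a strictly increasing sequence of integers indexed by −ℓ ≤ k ≤ u. Let N be the number of permutations π of {1,…,n} such that π_1 = r_0, the set of lower record values of π equals {r_{−ℓ}, …, r_{−1}, r_0}, and the set of upper record values of π equals {r_0, r_1, …, r_u}. Then N · ∏_{k=0}^{u−1} (n − r_k) · ∏_{k=0}^{ℓ−1} (r_{−k} − 1) = (n−1)!. -/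
/-!
Read a permutation after its first entry `c` one letter at a time, keeping track of the current
lower and upper records `lo ≤ hi`. The next letter either lies between them and creates no
record, or lies above `hi` and must then be the next prescribed upper record, or lies below `lo`
and must be the next prescribed lower record. Induction on the set `S` of letters still to be
read shows that the number of admissible orderings of `S`, multiplied by
`∏ #{s ∈ S | b < s}` over the current and future upper records `b` except the last one and by
the analogous product for the lower records, equals `#S !`: the letters between `lo` and `hi`
contribute one factor `(#S - 1)!` each, and the unique admissible letter above `hi` contributes
`#{s ∈ S | hi < s} · (#S - 1)!`, exactly cancelling the factor of `hi`.
-/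

open Finset

/-- the set of lower record values of `π`, as 1-based values in `{1,…,n}` -/
def lowerRecValues {n : ℕ} (π : Equiv.Perm (Fin n)) : Finset ℕ :=
  (univ.filter fun j : Fin n => isLowerRecord π j).image fun j => (π j).val + 1

/-- the set of upper record values of `π`, as 1-based values in `{1,…,n}` -/
def upperRecValues {n : ℕ} (π : Equiv.Perm (Fin n)) : Finset ℕ :=
  (univ.filter fun j : Fin n => isUpperRecord π j).image fun j => (π j).val + 1


open Function

variable {α : Type*}

section Records

variable [DecidableEq α] (r : α → α → Prop) [DecidableRel r]

instance : DecidableRel (swap r) := fun a b => inferInstanceAs (Decidable (r b a))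

/-- The values of the `r`-records of `c :: w` other than `c` itself. -/
def records : α → List α → Finset α
  | _, [] => ∅
  | c, x :: w => if r c x then insert x (records x w) else records c w

variable {r}

lemma records_cons_of_rel {c x : α} (h : r c x) (w : List α) :
    records r c (x :: w) = insert x (records r x w) := if_pos h

lemma records_cons_of_not_rel {c x : α} (h : ¬ r c x) (w : List α) :
    records r c (x :: w) = records r c w := if_neg h

lemma rel_of_mem_records [IsTrans α r] {c v : α} {w : List α} (h : v ∈ records r c w) :
    r c v := by
  induction w generalizing c with
  | nil => simp [records] at h
  | cons x w ih =>
    by_cases hcx : r c x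
    · rw [records_cons_of_rel hcx, mem_insert] at h
      exact h.elim (· ▸ hcx) (_root_.trans hcx ∘ ih)
    · exact ih (by rwa [records_cons_of_not_rel hcx] at h)

lemma insert_records_eq_iff [IsStrictOrder α r] {x : α} {w : List α} {B : Finset α} :
    insert x (records r x w) = B ↔
      x ∈ B ∧ (∀ b ∈ B, ¬ r b x) ∧ records r x w = B.erase x := by
  have hx : x ∉ records r x w := fun h => irrefl x (rel_of_mem_records h)
  constructor
  · rintro rfl
    refine ⟨mem_insert_self _ _, fun b hb hbx => ?_, (erase_insert hx).symm⟩
    rcases mem_insert.1 hb with rfl | hb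
    · exact irrefl b hbx
    · exact asymm hbx (rel_of_mem_records hb)
  · rintro ⟨hxB, -, h⟩
    rw [h, insert_erase hxB]

lemma records_ofFn [IsTrans α r] [Std.Trichotomous r] {n : ℕ} (f : Fin n → α) (c : α) :
    records r c (List.ofFn f) =
      (univ.filter fun j => r c (f j) ∧ ∀ k < j, r (f k) (f j)).image f := by
  induction n generalizing c with
  | zero => simp [records]
  | succ n ih =>
    ext v
    by_cases hc : r c (f 0)
    · rw [List.ofFn_succ, records_cons_of_rel hc, mem_insert, ih]
      simp only [mem_image, mem_filter, mem_univ, true_and, Fin.exists_fin_succ,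
        Fin.forall_fin_succ, Fin.succ_pos, Fin.succ_lt_succ_iff, forall_const, Fin.not_lt_zero,
        IsEmpty.forall_iff, implies_true, and_true, hc, eq_comm]
      exact or_congr Iff.rfl (exists_congr fun i => and_congr_left fun _ =>
        ⟨fun h => ⟨_root_.trans hc h.1, h⟩, And.right⟩)
    · rw [List.ofFn_succ, records_cons_of_not_rel hc, ih]
      simp only [mem_image, mem_filter, mem_univ, true_and, Fin.exists_fin_succ,
        Fin.forall_fin_succ, Fin.succ_pos, Fin.succ_lt_succ_iff, forall_const, Fin.not_lt_zero,
        IsEmpty.forall_iff, implies_true, and_true, hc, false_and, false_or]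
      exact exists_congr fun i => and_congr_left fun _ =>
        ⟨fun h => ⟨h.1, trans_trichotomous_left hc h.1, h.2⟩, fun h => ⟨h.1, h.2.2⟩⟩

end Records

def Finset.orderings (S : Finset α) : Finset (List α) :=
  ⟨Multiset.lists S.val, Multiset.lists_nodup_finset S⟩

lemma Finset.mem_orderings {S : Finset α} {l : List α} : l ∈ S.orderings ↔ S.val = l :=
  Multiset.mem_lists_iff _ _

lemma Finset.orderings_empty : (∅ : Finset α).orderings = {[]} :=
  ext fun l => by rw [mem_orderings, mem_singleton, empty_val, eq_comm, Multiset.coe_eq_zero]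

lemma Finset.card_orderings (S : Finset α) : #S.orderings = (#S).factorial := by
  change Multiset.card (Multiset.lists S.val) = _
  rw [← S.coe_toList, Multiset.lists_coe, Multiset.coe_card, List.length_permutations,
    S.length_toList]

lemma Finset.cons_mem_orderings [DecidableEq α] {S : Finset α} {x : α} {l : List α} :
    x :: l ∈ S.orderings ↔ x ∈ S ∧ l ∈ (S.erase x).orderings := by
  simp only [mem_orderings, erase_val, ← Multiset.cons_coe]
  constructor
  · intro h
    have hx : x ∈ S := by rw [← mem_val, h]; exact Multiset.mem_cons_self x _
    exact ⟨hx, by rw [h, Multiset.erase_cons_head]⟩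
  · rintro ⟨hx, h⟩
    rw [← h, Multiset.cons_erase hx]

lemma Finset.card_filter_orderings [DecidableEq α] {S : Finset α} (hS : S.Nonempty)
    (P : List α → Prop) [DecidablePred P] :
    #{l ∈ S.orderings | P l} = ∑ x ∈ S, #{l ∈ (S.erase x).orderings | P (x :: l)} := by
  have h : {l ∈ S.orderings | P l} = S.biUnion fun x =>
      {l ∈ (S.erase x).orderings | P (x :: l)}.map ⟨(x :: ·), List.cons_injective⟩ := by
    ext (_ | ⟨x, l⟩)
    · simp [mem_orderings, hS.ne_empty]
    · simp [cons_mem_orderings, and_assoc]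
  rw [h, card_biUnion]
  · simp
  · intro x _ y _ hxy
    simp only [onFun, disjoint_left, mem_map, Embedding.coeFn_mk]
    rintro _ ⟨l, -, rfl⟩ ⟨l', -, h⟩
    exact hxy (List.cons_eq_cons.1 h).1.symm

lemma Finset.Nonempty.exists_forall_not_rel {r : α → α → Prop} [IsStrictOrder α r]
    {B : Finset α} (hB : B.Nonempty) : ∃ x ∈ B, ∀ b ∈ B, ¬ r b x := by
  obtain ⟨x, hx, hmin⟩ :=
    (Set.wellFoundedOn_iff.1 (B.wellFoundedOn (r := r))).has_min (B : Set α) hB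
  exact ⟨x, hx, fun b hb hbx => hmin b hb ⟨hbx, hb, hx⟩⟩

lemma Finset.sum_eq_sum_filter_add_sum_filter_add {β : Type*} [AddCommMonoid β] (S : Finset α)
    (p q : α → Prop) [DecidablePred p] [DecidablePred q] (hpq : ∀ x ∈ S, q x → ¬ p x)
    (f : α → β) :
    ∑ x ∈ S, f x =
      ∑ x ∈ S with p x, f x + ∑ x ∈ S with q x, f x +
        ∑ x ∈ S with ¬ p x ∧ ¬ q x, f x := by
  rw [← sum_filter_add_sum_filter_not S p, ← sum_filter_add_sum_filter_not {x ∈ S | ¬ p x} q,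
    filter_filter, filter_filter, add_assoc]
  congr 3
  exact filter_congr fun x hx => and_iff_right_of_imp (hpq x hx)

section RecordChain

variable [DecidableEq α] {r : α → α → Prop} {S B : Finset α} {c x top : α}

variable (r) in
/-- The state after reading part of a word: `S` holds the letters still to be read, `c` is the
current record, `B` the set of records still to come and `top` the last record, which no letter
of `S` beats. -/
structure IsRecordChain (S : Finset α) (c : α) (B : Finset α) (top : α) : Prop where
  rel_of_mem : ∀ b ∈ B, r c b
  subset : B ⊆ S
  top_mem : top ∈ insert c B
  not_rel_top : ∀ s ∈ S, ¬ r top s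

namespace IsRecordChain

lemma erase (h : IsRecordChain r S c B top) (hx : x ∉ B) :
    IsRecordChain r (S.erase x) c B top where
  rel_of_mem := h.rel_of_mem
  subset _ hb := mem_erase.2 ⟨fun hbx => hx (hbx ▸ hb), h.subset hb⟩
  top_mem := h.top_mem
  not_rel_top s hs := h.not_rel_top s (mem_of_mem_erase hs)

lemma eq_empty (h : IsRecordChain r ∅ c B top) : B = ∅ ∧ top = c := by
  obtain rfl := subset_empty.1 h.subset
  simpa using h.top_mem

lemma top_ne (h : IsRecordChain r S c B top) (hx : x ∈ B) : top ≠ c := by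
  rintro rfl
  exact h.not_rel_top x (h.subset hx) (h.rel_of_mem x hx)

lemma erase_first [IsStrictTotalOrder α r] (h : IsRecordChain r S c B top) (hx : x ∈ B)
    (hfirst : ∀ b ∈ B, ¬ r b x) : IsRecordChain r (S.erase x) x (B.erase x) top where
  rel_of_mem b hb := (trichotomous_of r x b).resolve_right
    (not_or_intro (Ne.symm (ne_of_mem_erase hb)) (hfirst b (mem_of_mem_erase hb)))
  subset _ hb := erase_subset_erase x h.subset hb
  top_mem := by
    rw [insert_erase hx]
    exact (mem_insert.1 h.top_mem).resolve_left (h.top_ne hx)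
  not_rel_top s hs := h.not_rel_top s (mem_of_mem_erase hs)

lemma filter_rel_eq_empty [DecidableRel r] (h : IsRecordChain r S c ∅ top) :
    {s ∈ S | r c s} = ∅ := by
  obtain rfl : top = c := by simpa using h.top_mem
  exact filter_eq_empty_iff.2 h.not_rel_top

end IsRecordChain

variable [DecidableRel r]

variable (r) in
def recordWeight (S : Finset α) (c : α) (B : Finset α) (top : α) : ℕ :=
  ∏ b ∈ (insert c B).erase top, #{s ∈ S | r b s}

lemma recordWeight_empty (c : α) : recordWeight r ∅ c ∅ c = 1 := by
  simp [recordWeight]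

lemma card_filter_erase_of_not_rel {b : α} (h : ¬ r b x) :
    #{s ∈ S.erase x | r b s} = #{s ∈ S | r b s} := by
  rw [filter_erase, erase_eq_of_notMem (by simp [h])]

lemma IsRecordChain.recordWeight_erase [IsTrans α r] (h : IsRecordChain r S c B top)
    (hx : ¬ r c x) : recordWeight r (S.erase x) c B top = recordWeight r S c B top := by
  refine prod_congr rfl fun b hb => card_filter_erase_of_not_rel ?_
  rcases mem_insert.1 (mem_of_mem_erase hb) with rfl | hb
  · exact hx
  · exact fun hbx => hx (_root_.trans (h.rel_of_mem b hb) hbx)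

lemma IsRecordChain.recordWeight_eq [IsStrictOrder α r] (h : IsRecordChain r S c B top)
    (hx : x ∈ B) (hfirst : ∀ b ∈ B, ¬ r b x) :
    recordWeight r S c B top =
      #{s ∈ S | r c s} * recordWeight r (S.erase x) x (B.erase x) top := by
  have hcB : c ∉ B.erase top := fun hc => irrefl c (h.rel_of_mem c (mem_of_mem_erase hc))
  rw [recordWeight, recordWeight, insert_erase hx, erase_insert_of_ne (h.top_ne hx).symm,
    prod_insert hcB]
  exact congrArg _ (prod_congr rfl fun b hb =>
    (card_filter_erase_of_not_rel (hfirst b (mem_of_mem_erase hb))).symm)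

end RecordChain

section RecordCount

variable [DecidableEq α] {r : α → α → Prop} [DecidableRel r]
  {S Blo Bhi : Finset α} {x lo hi : α}

variable (r) in
def recordCount (S : Finset α) (lo hi : α) (Blo Bhi : Finset α) : ℕ :=
  #{w ∈ S.orderings | records (swap r) lo w = Blo ∧ records r hi w = Bhi}

variable (r) in
def recordCountCons (S : Finset α) (lo hi : α) (Blo Bhi : Finset α) (x : α) : ℕ :=
  #{w ∈ (S.erase x).orderings |
    records (swap r) lo (x :: w) = Blo ∧ records r hi (x :: w) = Bhi}

lemma recordCount_swap :
    recordCount (swap r) S hi lo Bhi Blo = recordCount r S lo hi Blo Bhi :=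
  congrArg _ (filter_congr fun _ _ => and_comm)

lemma recordCountCons_swap :
    recordCountCons (swap r) S hi lo Bhi Blo x = recordCountCons r S lo hi Blo Bhi x :=
  congrArg _ (filter_congr fun _ _ => and_comm)

lemma recordCount_eq_sum (hS : S.Nonempty) :
    recordCount r S lo hi Blo Bhi = ∑ x ∈ S, recordCountCons r S lo hi Blo Bhi x :=
  card_filter_orderings hS _

lemma recordCount_empty : recordCount r ∅ lo hi ∅ ∅ = 1 := by
  simp [recordCount, orderings_empty, filter_singleton, records]

lemma recordCountCons_of_not_rel (hhi : ¬ r hi x) (hlo : ¬ r x lo) :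
    recordCountCons r S lo hi Blo Bhi x = recordCount r (S.erase x) lo hi Blo Bhi := by
  simp only [recordCountCons, recordCount, records_cons_of_not_rel hhi,
    records_cons_of_not_rel (r := swap r) hlo]

lemma recordCountCons_of_rel [IsStrictOrder α r] (hlohi : ¬ r hi lo) (hx : r hi x) :
    recordCountCons r S lo hi Blo Bhi x = if x ∈ Bhi ∧ ∀ b ∈ Bhi, ¬ r b x then
      recordCount r (S.erase x) lo x Blo (Bhi.erase x) else 0 := by
  have hlo : ¬ swap r lo x := fun h => hlohi (_root_.trans hx h)
  simp only [recordCountCons, recordCount, records_cons_of_rel hx, records_cons_of_not_rel hlo,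
    insert_records_eq_iff]
  split_ifs with h
  · simp only [h.1, eq_true h.2, true_and]
  · exact card_eq_zero.2 (filter_false_of_mem fun _ _ hw => h ⟨hw.2.1, hw.2.2.1⟩)

variable [IsStrictTotalOrder α r] {bot top : α} {K : ℕ}

lemma sum_recordCountCons_of_rel (hlohi : ¬ r hi lo) (hlo : IsRecordChain (swap r) S lo Blo bot)
    (hhi : IsRecordChain r S hi Bhi top)
    (ih : ∀ x ∈ Bhi, (∀ b ∈ Bhi, ¬ r b x) →
      recordCount r (S.erase x) lo x Blo (Bhi.erase x) *
        recordWeight r (S.erase x) x (Bhi.erase x) top *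
        recordWeight (swap r) (S.erase x) lo Blo bot = K) :
    (∑ x ∈ S with r hi x, recordCountCons r S lo hi Blo Bhi x) * recordWeight r S hi Bhi top *
      recordWeight (swap r) S lo Blo bot = #{x ∈ S | r hi x} * K := by
  rcases Bhi.eq_empty_or_nonempty with rfl | hB
  · simp [hhi.filter_rel_eq_empty]
  obtain ⟨x, hx, hfirst⟩ := hB.exists_forall_not_rel (r := r)
  have hhix := hhi.rel_of_mem x hx
  rw [sum_eq_single_of_mem x (mem_filter.2 ⟨hhi.subset hx, hhix⟩),
    recordCountCons_of_rel hlohi hhix, if_pos ⟨hx, hfirst⟩, hhi.recordWeight_eq hx hfirst,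
    ← hlo.recordWeight_erase (x := x) fun h => hlohi (_root_.trans hhix h), ← ih x hx hfirst]
  · ring
  · intro y hy hyx
    rw [recordCountCons_of_rel hlohi (mem_filter.1 hy).2, if_neg]
    rintro ⟨hyB, hyfirst⟩
    exact hyx (((trichotomous_of r x y).resolve_left (hyfirst x hx)).resolve_right
      (hfirst y hyB)).symm

lemma sum_recordCountCons_of_not_rel (hlo : IsRecordChain (swap r) S lo Blo bot)
    (hhi : IsRecordChain r S hi Bhi top)
    (ih : ∀ x ∈ S, ¬ r hi x → ¬ r x lo →
      recordCount r (S.erase x) lo hi Blo Bhi * recordWeight r (S.erase x) hi Bhi top *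
        recordWeight (swap r) (S.erase x) lo Blo bot = K) :
    (∑ x ∈ S with ¬ r hi x ∧ ¬ r x lo, recordCountCons r S lo hi Blo Bhi x) *
      recordWeight r S hi Bhi top * recordWeight (swap r) S lo Blo bot =
      #{x ∈ S | ¬ r hi x ∧ ¬ r x lo} * K := by
  rw [sum_mul, sum_mul, card_eq_sum_ones, sum_mul]
  refine sum_congr rfl fun x hx => ?_
  obtain ⟨hxS, hhix, hxlo⟩ := mem_filter.1 hx
  rw [recordCountCons_of_not_rel hhix hxlo, ← hhi.recordWeight_erase hhix,
    ← hlo.recordWeight_erase (x := x) hxlo, ih x hxS hhix hxlo, one_mul]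

theorem recordCount_mul_recordWeight_mul_recordWeight (hlohi : ¬ r hi lo)
    (hlo : IsRecordChain (swap r) S lo Blo bot) (hhi : IsRecordChain r S hi Bhi top) :
    recordCount r S lo hi Blo Bhi * recordWeight r S hi Bhi top *
      recordWeight (swap r) S lo Blo bot = (#S).factorial := by
  induction S using strongInduction generalizing lo hi Blo Bhi with
  | H S ih =>
  rcases S.eq_empty_or_nonempty with rfl | hS
  · obtain ⟨rfl, rfl⟩ := hlo.eq_empty
    obtain ⟨rfl, rfl⟩ := hhi.eq_empty
    simp [recordCount_empty, recordWeight_empty]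
  have ih' : ∀ x ∈ S, ∀ {lo hi Blo Bhi}, ¬ r hi lo →
      IsRecordChain (swap r) (S.erase x) lo Blo bot → IsRecordChain r (S.erase x) hi Bhi top →
      recordCount r (S.erase x) lo hi Blo Bhi * recordWeight r (S.erase x) hi Bhi top *
        recordWeight (swap r) (S.erase x) lo Blo bot = (#S - 1).factorial :=
    fun x hx _ _ _ _ h₁ h₂ h₃ =>
      card_erase_of_mem hx ▸ ih _ (erase_ssubset hx) h₁ h₂ h₃
  have hupper := sum_recordCountCons_of_rel hlohi hlo hhi fun x hx hfirst =>
    have hhix := hhi.rel_of_mem x hx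
    ih' x (hhi.subset hx) (fun h => hlohi (_root_.trans hhix h))
      (hlo.erase fun h => hlohi (_root_.trans hhix (hlo.rel_of_mem x h)))
      (hhi.erase_first hx hfirst)
  -- the lower records for `r` are the upper records for `swap r`
  have hlower := sum_recordCountCons_of_rel (r := swap r) hlohi hhi hlo fun x hx hfirst => by
    have hxlo := hlo.rel_of_mem x hx
    rw [recordCount_swap, mul_right_comm]
    exact ih' x (hlo.subset hx) (fun h => hlohi (_root_.trans h hxlo)) (hlo.erase_first hx hfirst)
      (hhi.erase fun h => hlohi (_root_.trans (hhi.rel_of_mem x h) hxlo))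
  have hmiddle := sum_recordCountCons_of_not_rel hlo hhi fun x hx hhix hxlo =>
    ih' x hx hlohi (hlo.erase fun h => hxlo (hlo.rel_of_mem x h))
      (hhi.erase fun h => hhix (hhi.rel_of_mem x h))
  simp only [recordCountCons_swap, mul_right_comm _ (recordWeight (swap r) _ _ _ _), swap]
    at hlower
  have hpq : ∀ x ∈ S, r x lo → ¬ r hi x := fun _ _ hxlo hhix =>
    hlohi (_root_.trans hhix hxlo)
  have hcard := sum_eq_sum_filter_add_sum_filter_add S _ _ hpq fun _ => 1
  simp only [← card_eq_sum_ones] at hcard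
  rw [recordCount_eq_sum hS, sum_eq_sum_filter_add_sum_filter_add S _ _ hpq, add_mul, add_mul,
    add_mul, add_mul, hupper, hlower, hmiddle, ← add_mul, ← add_mul, ← hcard,
    Nat.mul_factorial_pred hS.card_pos.ne']

end RecordCount

section Permutations

variable {n : ℕ}

def permWord (π : Equiv.Perm (Fin n)) : List ℕ := List.ofFn fun j => (π j : ℕ) + 1

lemma permWord_injective : Injective (permWord (n := n)) := fun π σ h => by
  ext j
  simpa using congrFun (List.ofFn_injective h) j

lemma head?_permWord (hn : 0 < n) (π : Equiv.Perm (Fin n)) :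
    (permWord π).head? = some ((π ⟨0, hn⟩ : ℕ) + 1) := by
  obtain ⟨m, rfl⟩ := Nat.exists_eq_add_one_of_ne_zero hn.ne'
  simp [permWord, List.ofFn_succ]

lemma permWord_mem_orderings (π : Equiv.Perm (Fin n)) : permWord π ∈ (Icc 1 n).orderings := by
  have hnodup : (permWord π).Nodup :=
    List.nodup_ofFn.2 fun i j h => π.injective (Fin.ext (by simpa using h))
  rw [mem_orderings, Multiset.Nodup.ext (nodup _) (Multiset.coe_nodup.2 hnodup)]
  intro v
  simp only [mem_val, mem_Icc, Multiset.mem_coe, permWord, List.mem_ofFn]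
  constructor
  · rintro ⟨hv1, hvn⟩
    exact ⟨π.symm ⟨v - 1, by omega⟩, by simp; omega⟩
  · rintro ⟨j, rfl⟩
    exact ⟨by omega, (π j).isLt⟩

lemma image_permWord : univ.image (permWord (n := n)) = (Icc 1 n).orderings := by
  refine eq_of_subset_of_card_le (image_subset_iff.2 fun π _ => permWord_mem_orderings π) ?_
  rw [card_orderings, card_image_of_injective _ permWord_injective, card_univ, Fintype.card_perm,
    Fintype.card_fin, Nat.card_Icc, Nat.add_sub_cancel]

lemma isUpperRecord_iff (π : Equiv.Perm (Fin n)) (j : Fin n) :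
    isUpperRecord π j ↔ ∀ k < j, π k < π j :=
  ⟨fun h k hk => (h k hk.le).lt_of_ne (π.injective.ne hk.ne),
    fun h k hk => hk.eq_or_lt.elim (fun hkj => hkj ▸ le_rfl) fun hkj => (h k hkj).le⟩

lemma isLowerRecord_iff (π : Equiv.Perm (Fin n)) (j : Fin n) :
    isLowerRecord π j ↔ ∀ k < j, π j < π k :=
  ⟨fun h k hk => (h k hk.le).lt_of_ne (π.injective.ne hk.ne'),
    fun h k hk => hk.eq_or_lt.elim (fun hkj => hkj ▸ le_rfl) fun hkj => (h k hkj).le⟩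

lemma upperRecValues_eq_records (π : Equiv.Perm (Fin n)) :
    upperRecValues π = records (· < ·) 0 (permWord π) := by
  rw [permWord, records_ofFn, upperRecValues]
  refine congrArg _ (filter_congr fun j _ => ?_)
  simp only [isUpperRecord_iff, Nat.add_lt_add_iff_right, Fin.val_fin_lt, Nat.succ_pos, true_and]

lemma lowerRecValues_eq_records (π : Equiv.Perm (Fin n)) :
    lowerRecValues π = records (swap (· < ·)) (n + 1) (permWord π) := by
  rw [permWord, records_ofFn, lowerRecValues]
  refine congrArg _ (filter_congr fun j _ => ?_)
  simp only [swap, isLowerRecord_iff, Nat.add_lt_add_iff_right, Fin.val_fin_lt, Fin.is_lt,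
    true_and]

lemma card_perm_eq_recordCount (hn : 0 < n) {c : ℕ} (hc : c ∈ Icc 1 n) {Blo Bhi : Finset ℕ}
    (hBlo : c ∉ Blo) (hBhi : c ∉ Bhi) :
    #{π : Equiv.Perm (Fin n) | (π ⟨0, hn⟩ : ℕ) + 1 = c ∧
        lowerRecValues π = insert c Blo ∧ upperRecValues π = insert c Bhi} =
      recordCount (· < ·) ((Icc 1 n).erase c) c c Blo Bhi := by
  set Q : List ℕ → Prop := fun l => l.head? = some c ∧
    records (swap (· < ·)) (n + 1) l = insert c Blo ∧ records (· < ·) 0 l = insert c Bhi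
  have cancel : ∀ {A B : Finset ℕ}, c ∉ A → c ∉ B →
      (insert c A = insert c B ↔ A = B) :=
    fun hA hB => ⟨fun h => by rw [← erase_insert hA, h, erase_insert hB], congrArg _⟩
  calc _ = #{l ∈ (Icc 1 n).orderings | Q l} := by
        rw [← image_permWord, filter_image, card_image_of_injective _ permWord_injective]
        refine congrArg _ (filter_congr fun π _ => ?_)
        simp only [Q, head?_permWord hn, Option.some.injEq, lowerRecValues_eq_records,
          upperRecValues_eq_records]
    _ = ∑ x ∈ Icc 1 n, #{l ∈ ((Icc 1 n).erase x).orderings | Q (x :: l)} :=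
        card_filter_orderings ⟨c, hc⟩ Q
    _ = #{l ∈ ((Icc 1 n).erase c).orderings | Q (c :: l)} :=
        sum_eq_single_of_mem c hc fun x _ hxc =>
          card_eq_zero.2 (filter_false_of_mem fun l _ hl => hxc (Option.some.inj hl.1))
    _ = recordCount (· < ·) ((Icc 1 n).erase c) c c Blo Bhi := by
        refine congrArg _ (filter_congr fun l _ => ?_)
        have hcn : swap (· < ·) (n + 1) c := Nat.lt_succ_of_le (mem_Icc.1 hc).2
        have hc0 : 0 < c := (mem_Icc.1 hc).1
        simp only [Q, List.head?_cons, true_and, records_cons_of_rel hcn, records_cons_of_rel hc0]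
        rw [cancel (fun h => irrefl c (rel_of_mem_records h)) hBlo,
          cancel (fun h => irrefl c (rel_of_mem_records h)) hBhi]

end Permutations

section Sequences

variable [DecidableEq α] {r : α → α → Prop} {S : Finset α} {a : ℕ → α} {u : ℕ}

lemma isRecordChain_image_Ioc (ha : ∀ i j, i < j → j ≤ u → r (a i) (a j))
    (hS : ∀ k ∈ Ioc 0 u, a k ∈ S) (htop : ∀ s ∈ S, ¬ r (a u) s) :
    IsRecordChain r S (a 0) ((Ioc 0 u).image a) (a u) where
  rel_of_mem := by
    simp only [mem_image, mem_Ioc, forall_exists_index, and_imp]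
    rintro _ k hk hku rfl
    exact ha 0 k hk hku
  subset := image_subset_iff.2 hS
  top_mem := by
    rw [← image_insert, Ioc_insert_left (Nat.zero_le u)]
    exact mem_image_of_mem a (right_mem_Icc.2 (Nat.zero_le u))
  not_rel_top := htop

lemma recordWeight_image_Ioc [IsStrictOrder α r] [DecidableRel r]
    (ha : ∀ i j, i < j → j ≤ u → r (a i) (a j)) :
    recordWeight r S (a 0) ((Ioc 0 u).image a) (a u) =
      ∏ k ∈ range u, #{s ∈ S | r (a k) s} := by
  have hinj : Set.InjOn a (range u) := by
    intro i hi j hj hij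
    simp only [coe_range, Set.mem_Iio] at hi hj
    by_contra hne
    rcases Nat.lt_or_gt_of_ne hne with h | h
    · exact irrefl _ (hij ▸ ha i j h hj.le)
    · exact irrefl _ (hij ▸ ha j i h hi.le)
  have hu : a u ∉ (range u).image a := by
    simp only [mem_image, mem_range, not_exists, not_and]
    exact fun k hk hku => irrefl _ (hku ▸ ha k u hk le_rfl)
  rw [recordWeight, ← image_insert, Ioc_insert_left (Nat.zero_le u),
    ← Ico_insert_right (Nat.zero_le u), ← range_eq_Ico, image_insert, erase_insert hu,
    prod_image hinj]

end Sequences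

lemma card_filter_lt_erase_Icc {n b c : ℕ} (hcb : c ≤ b) :
    #{s ∈ (Icc 1 n).erase c | b < s} = n - b := by
  rw [filter_erase, erase_eq_of_notMem (by simp; omega),
    show {s ∈ Icc 1 n | b < s} = Ioc b n by ext; simp; omega, Nat.card_Ioc]

lemma card_filter_gt_erase_Icc {n b c : ℕ} (hbc : b ≤ c) (hcn : c ≤ n) :
    #{s ∈ (Icc 1 n).erase c | s < b} = b - 1 := by
  rw [filter_erase, erase_eq_of_notMem (by simp; omega),
    show {s ∈ Icc 1 n | s < b} = Ico 1 b by ext; simp; omega, Nat.card_Ico]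

section Chains

variable {n u : ℕ} {a : ℕ → ℕ}

lemma isRecordChain_of_strictMonoOn (ha : StrictMonoOn a (Set.Iic u)) (h1 : 1 ≤ a 0)
    (hu : a u = n) :
    IsRecordChain (· < ·) ((Icc 1 n).erase (a 0)) (a 0) ((Ioc 0 u).image a) (a u) :=
  isRecordChain_image_Ioc (fun _ _ hij hj => ha (hij.le.trans hj) hj hij)
    (fun k hk => mem_erase.2 ⟨(ha (Nat.zero_le u) (mem_Ioc.1 hk).2 (mem_Ioc.1 hk).1).ne',
      mem_Icc.2 ⟨h1.trans (ha.monotoneOn (Nat.zero_le u) (mem_Ioc.1 hk).2 (Nat.zero_le k)),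
        hu ▸ ha.monotoneOn (mem_Ioc.1 hk).2 Set.self_mem_Iic (mem_Ioc.1 hk).2⟩⟩)
    (fun _ hs => hu ▸ not_lt.2 (mem_Icc.1 (mem_of_mem_erase hs)).2)

lemma recordWeight_of_strictMonoOn (ha : StrictMonoOn a (Set.Iic u)) :
    recordWeight (· < ·) ((Icc 1 n).erase (a 0)) (a 0) ((Ioc 0 u).image a) (a u) =
      ∏ k ∈ range u, (n - a k) := by
  rw [recordWeight_image_Ioc fun _ _ hij hj => ha (hij.le.trans hj) hj hij]
  exact prod_congr rfl fun k hk => card_filter_lt_erase_Icc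
    (ha.monotoneOn (Nat.zero_le u) (mem_range.1 hk).le (Nat.zero_le k))

lemma isRecordChain_of_strictAntiOn (ha : StrictAntiOn a (Set.Iic u)) (hu : a u = 1)
    (hn : a 0 ≤ n) :
    IsRecordChain (swap (· < ·)) ((Icc 1 n).erase (a 0)) (a 0) ((Ioc 0 u).image a) (a u) :=
  isRecordChain_image_Ioc (fun _ _ hij hj => ha (hij.le.trans hj) hj hij)
    (fun k hk => mem_erase.2 ⟨(ha (Nat.zero_le u) (mem_Ioc.1 hk).2 (mem_Ioc.1 hk).1).ne,
      mem_Icc.2 ⟨hu ▸ ha.antitoneOn (mem_Ioc.1 hk).2 Set.self_mem_Iic (mem_Ioc.1 hk).2,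
        (ha.antitoneOn (Nat.zero_le u) (mem_Ioc.1 hk).2 (Nat.zero_le k)).trans hn⟩⟩)
    (fun _ hs => hu ▸ not_lt.2 (mem_Icc.1 (mem_of_mem_erase hs)).1)

lemma recordWeight_of_strictAntiOn (ha : StrictAntiOn a (Set.Iic u)) (hn : a 0 ≤ n) :
    recordWeight (swap (· < ·)) ((Icc 1 n).erase (a 0)) (a 0) ((Ioc 0 u).image a) (a u) =
      ∏ k ∈ range u, (a k - 1) := by
  rw [recordWeight_image_Ioc fun _ _ hij hj => ha (hij.le.trans hj) hj hij]
  exact prod_congr rfl fun k hk => card_filter_gt_erase_Icc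
    (ha.antitoneOn (Nat.zero_le u) (mem_range.1 hk).le (Nat.zero_le k)) hn

end Chains

theorem card_perm_mul_prod_mul_prod {n ℓ u : ℕ} (hn : 0 < n) {up down : ℕ → ℕ}
    (hup : StrictMonoOn up (Set.Iic u)) (hdown : StrictAntiOn down (Set.Iic ℓ))
    (h0 : down 0 = up 0) (hℓ : down ℓ = 1) (hu : up u = n) :
    #{π : Equiv.Perm (Fin n) | (π ⟨0, hn⟩ : ℕ) + 1 = up 0 ∧
        lowerRecValues π = (Icc 0 ℓ).image down ∧ upperRecValues π = (Icc 0 u).image up} *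
      (∏ k ∈ range u, (n - up k)) * (∏ k ∈ range ℓ, (down k - 1)) =
      (n - 1).factorial := by
  have hmin : 1 ≤ up 0 :=
    h0 ▸ hℓ ▸ hdown.antitoneOn (Nat.zero_le ℓ) Set.self_mem_Iic (Nat.zero_le ℓ)
  have hmax : down 0 ≤ n :=
    h0 ▸ hu ▸ hup.monotoneOn (Nat.zero_le u) Set.self_mem_Iic (Nat.zero_le u)
  have hc : up 0 ∈ Icc 1 n := mem_Icc.2 ⟨hmin, h0 ▸ hmax⟩
  have hlo := isRecordChain_of_strictAntiOn hdown hℓ hmax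
  have hhi := isRecordChain_of_strictMonoOn hup hmin hu
  rw [← recordWeight_of_strictMonoOn hup, ← recordWeight_of_strictAntiOn hdown hmax,
    ← Ioc_insert_left (Nat.zero_le u), ← Ioc_insert_left (Nat.zero_le ℓ), image_insert,
    image_insert, h0]
  rw [h0] at hlo
  rw [card_perm_eq_recordCount hn hc (fun h => irrefl _ (hlo.rel_of_mem _ h))
      (fun h => irrefl _ (hhi.rel_of_mem _ h)),
    show n - 1 = #((Icc 1 n).erase (up 0)) by simp [card_erase_of_mem hc]]
  exact recordCount_mul_recordWeight_mul_recordWeight (lt_irrefl _) hlo hhi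

lemma image_Icc_natCast {β : Type*} [DecidableEq β] (f : ℤ → β) (u : ℕ) :
    (Icc (0 : ℤ) u).image f = (Icc 0 u).image fun k : ℕ => f k := by
  ext v
  simp only [mem_image, mem_Icc]
  constructor
  · rintro ⟨k, ⟨hk0, hku⟩, rfl⟩
    exact ⟨k.toNat, by omega, by rw [Int.toNat_of_nonneg hk0]⟩
  · rintro ⟨k, ⟨-, hku⟩, rfl⟩
    exact ⟨k, by omega, rfl⟩

lemma image_Icc_neg_natCast {β : Type*} [DecidableEq β] (f : ℤ → β) (ℓ : ℕ) :
    (Icc (-(ℓ : ℤ)) 0).image f = (Icc 0 ℓ).image fun k : ℕ => f (-k) := by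
  ext v
  simp only [mem_image, mem_Icc]
  constructor
  · rintro ⟨k, ⟨hkℓ, hk0⟩, rfl⟩
    exact ⟨(-k).toNat, by omega, by rw [Int.toNat_of_nonneg (by omega), neg_neg]⟩
  · rintro ⟨k, ⟨-, hkℓ⟩, rfl⟩
    exact ⟨-k, by omega, rfl⟩

/-- if `N` is the number of permutations of `{1,…,n}` with center `r 0`,
lower record values `{r_{−ℓ},…,r_0}` and upper record values `{r_0,…,r_u}`, then
`N ⬝ ∏_{k=0}^{u−1} (n − r_k) ⬝ ∏_{k=0}^{ℓ−1} (r_{−k} − 1) = (n−1)!`. -/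
theorem stmt_5 (n : ℕ) (hn : 0 < n) (ℓ u : ℕ) (r : ℤ → ℕ)
    (hmono : StrictMonoOn r (Set.Icc (-(ℓ : ℤ)) (u : ℤ)))
    (hfirst : r (-(ℓ : ℤ)) = 1) (hlast : r (u : ℤ) = n) :
    (univ.filter fun π : Equiv.Perm (Fin n) =>
        (π ⟨0, hn⟩).val + 1 = r 0 ∧
        lowerRecValues π = (Finset.Icc (-(ℓ : ℤ)) 0).image r ∧
        upperRecValues π = (Finset.Icc (0 : ℤ) (u : ℤ)).image r).card
      * (∏ k ∈ Finset.range u, (n - r (k : ℤ)))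
      * (∏ k ∈ Finset.range ℓ, (r (-(k : ℤ)) - 1))
      = Nat.factorial (n - 1) := by
  have hup : StrictMonoOn (fun k : ℕ => r k) (Set.Iic u) := fun i hi j hj hij =>
    hmono ⟨by omega, by simpa using hi⟩ ⟨by omega, by simpa using hj⟩
      (by exact_mod_cast hij)
  have hdown : StrictAntiOn (fun k : ℕ => r (-k)) (Set.Iic ℓ) := fun i hi j hj hij =>
    hmono ⟨by simpa using hj, by omega⟩ ⟨by simpa using hi, by omega⟩ (by simpa using hij)
  have h := card_perm_mul_prod_mul_prod hn hup hdown rfl hfirst hlast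
  simp only [Nat.cast_zero] at h
  rwa [image_Icc_natCast, image_Icc_neg_natCast]
end

section
/- For θ, ζ > 0 and n ≥ 2, let E_n(θ,ζ) = (Σ_{π ∈ S_n} ℓ(π) · θ^{ℓ(π)} ζ^{u(π)}) / ∏_{j=0}^{n−2}(θ+ζ+j) be the expected number of proper lower records of a permutation distributed according to P_n^{(θ,ζ)}. Then E_n(θ,ζ) = Σ_{j=2}^{n} θ/(θ+ζ+j−2), and consequently E_n(θ,ζ)/log n → θ as n → ∞. -/
/-!
Deleting the last entry of a permutation of `{1,…,n+1}` and standardising the rest is a bijection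
`S_{n+1} ≃ S_n × {1,…,n+1}` that keeps every record at an earlier position; the deleted entry was
a lower record exactly when it is `1` and an upper record exactly when it is `n+1`. Hence
`Z_n = Σ θ^ℓ ζ^u` and `M_n = Σ ℓ θ^ℓ ζ^u` satisfy `Z_{n+1} = (θ+ζ+n-1) Z_n` and
`M_{n+1} = (θ+ζ+n-1) M_n + θ Z_n`, so `E_n = M_n / Z_n` grows by `θ/(θ+ζ+n-1)` at each step.
Comparing `1/(c+k)` with `log (c+k+1) - log (c+k)` gives `Σ_{k<m} 1/(c+k) = log m + O(1)`.
-/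

open Finset

/-- `E_n(θ,ζ) = (Σ_{π ∈ S_n} ℓ(π) θ^{ℓ(π)} ζ^{u(π)}) / (θ+ζ)_{n−1}`, the expected number
of proper lower records under `P_n^{(θ,ζ)}`. -/
noncomputable def expLower (θ ζ : ℝ) (n : ℕ) : ℝ :=
  (∑ π : Equiv.Perm (Fin n),
      (properLowerCount π : ℝ) * θ ^ properLowerCount π * ζ ^ properUpperCount π)
    / ∏ j ∈ Finset.range (n - 1), (θ + ζ + (j : ℝ))

theorem Fin.forall_le_castSucc_iff_s8 {n : ℕ} {p : Fin (n + 1) → Prop} {i : Fin n} :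
    (∀ k ≤ i.castSucc, p k) ↔ ∀ k ≤ i, p k.castSucc := by
  refine ⟨fun h k hk => h _ (Fin.castSucc_le_castSucc_iff.2 hk), fun h k hk => ?_⟩
  obtain ⟨k, rfl⟩ := Fin.exists_castSucc_eq.2 (Fin.ne_last_of_lt (hk.trans_lt i.castSucc_lt_last))
  exact h k (Fin.castSucc_le_castSucc_iff.1 hk)

/-- The permutation of `Fin (n + 1)` ending in `v` whose first `n` entries are those of `σ`,
relabelled order-preservingly onto the values other than `v`. -/
noncomputable def snocPerm {n : ℕ} (σ : Equiv.Perm (Fin n)) (v : Fin (n + 1)) :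
    Equiv.Perm (Fin (n + 1)) :=
  Equiv.ofBijective (Fin.snoc (α := fun _ => Fin (n + 1)) (v.succAbove ∘ σ) v)
    (Fin.snoc_injective_of_injective (v.succAbove_right_injective.comp σ.injective)
      fun ⟨i, hi⟩ => Fin.succAbove_ne v (σ i) hi).bijective_of_finite

section snocPerm

variable {n : ℕ} (σ : Equiv.Perm (Fin n)) (v : Fin (n + 1))

@[simp]
theorem snocPerm_castSucc (i : Fin n) : snocPerm σ v i.castSucc = v.succAbove (σ i) := by
  simp [snocPerm]

@[simp]
theorem snocPerm_last : snocPerm σ v (Fin.last n) = v := by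
  simp [snocPerm]

theorem snocPerm_bijective :
    Function.Bijective fun p : Equiv.Perm (Fin n) × Fin (n + 1) => snocPerm p.1 p.2 := by
  refine (Fintype.bijective_iff_injective_and_card _).2 ⟨?_, ?_⟩
  · rintro ⟨σ, v⟩ ⟨τ, w⟩ h
    have h' := congrArg DFunLike.coe h
    simp only [snocPerm, Equiv.coe_ofBijective] at h'
    obtain ⟨hστ, rfl⟩ := Fin.snoc_injective2 h'
    exact Prod.ext (Equiv.ext fun i => v.succAbove_right_injective (congrFun hστ i)) rfl
  · simp [Fintype.card_perm, Nat.factorial_succ, mul_comm]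

theorem isLowerRecord_snocPerm_castSucc (i : Fin n) :
    isLowerRecord (snocPerm σ v) i.castSucc ↔ isLowerRecord σ i := by
  simp only [isLowerRecord, Fin.forall_le_castSucc_iff_s8, snocPerm_castSucc,
    Fin.succAbove_le_succAbove_iff]

theorem isUpperRecord_snocPerm_castSucc (i : Fin n) :
    isUpperRecord (snocPerm σ v) i.castSucc ↔ isUpperRecord σ i := by
  simp only [isUpperRecord, Fin.forall_le_castSucc_iff_s8, snocPerm_castSucc,
    Fin.succAbove_le_succAbove_iff]

theorem isLowerRecord_snocPerm_last : isLowerRecord (snocPerm σ v) (Fin.last n) ↔ v = 0 := by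
  refine ⟨fun h => ?_, fun hv k _ => by simp [hv]⟩
  simpa using h ((snocPerm σ v).symm 0) (Fin.le_last _)

theorem isUpperRecord_snocPerm_last :
    isUpperRecord (snocPerm σ v) (Fin.last n) ↔ v = Fin.last n := by
  refine ⟨fun h => ?_, fun hv k _ => by simp [hv, Fin.le_last]⟩
  have := h ((snocPerm σ v).symm (Fin.last n)) (Fin.le_last _)
  exact le_antisymm (Fin.le_last v) (by simpa using this)

end snocPerm

section snocPermCount

variable {n : ℕ} (σ : Equiv.Perm (Fin (n + 1))) (v : Fin (n + 2))

theorem properLowerCount_snocPerm :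
    properLowerCount (snocPerm σ v) = properLowerCount σ + if v = 0 then 1 else 0 := by
  simp only [properLowerCount, card_filter, Fin.sum_univ_castSucc, Fin.val_castSucc,
    isLowerRecord_snocPerm_castSucc, isLowerRecord_snocPerm_last, Fin.val_last]
  simp

theorem properUpperCount_snocPerm :
    properUpperCount (snocPerm σ v) =
      properUpperCount σ + if v = Fin.last (n + 1) then 1 else 0 := by
  simp only [properUpperCount, card_filter, Fin.sum_univ_castSucc, Fin.val_castSucc,
    isUpperRecord_snocPerm_castSucc, isUpperRecord_snocPerm_last, Fin.val_last]
  simp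

end snocPermCount

theorem sum_perm_succ_eq_sum_snocPerm {M : Type*} [AddCommMonoid M] {n : ℕ}
    (f : Equiv.Perm (Fin (n + 1)) → M) :
    ∑ π, f π = ∑ σ : Equiv.Perm (Fin n), ∑ v, f (snocPerm σ v) := by
  rw [← Fintype.sum_prod_type']
  exact (Fintype.sum_bijective _ snocPerm_bijective _ f fun _ => rfl).symm

theorem sum_perm_records_succ {M : Type*} [AddCommMonoid M] (f : ℕ → ℕ → M) (n : ℕ) :
    ∑ π : Equiv.Perm (Fin (n + 2)), f (properLowerCount π) (properUpperCount π) =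
      ∑ σ : Equiv.Perm (Fin (n + 1)),
        (f (properLowerCount σ + 1) (properUpperCount σ) +
          f (properLowerCount σ) (properUpperCount σ + 1) +
          n • f (properLowerCount σ) (properUpperCount σ)) := by
  rw [sum_perm_succ_eq_sum_snocPerm]
  refine sum_congr rfl fun σ _ => ?_
  simp only [properLowerCount_snocPerm, properUpperCount_snocPerm]
  rw [Fin.sum_univ_succ, Fin.sum_univ_castSucc]
  simp [Fin.succ_ne_zero, add_assoc, add_comm]

section WeightSums

variable {R : Type*} [CommSemiring R] (θ ζ : R)

/-- The normalising constant of `P_n^{(θ,ζ)}`. -/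
def recordWeightSum (n : ℕ) : R :=
  ∑ π : Equiv.Perm (Fin n), θ ^ properLowerCount π * ζ ^ properUpperCount π

def lowerRecordWeightSum (n : ℕ) : R :=
  ∑ π : Equiv.Perm (Fin n),
    (properLowerCount π : R) * θ ^ properLowerCount π * ζ ^ properUpperCount π

theorem properLowerCount_of_fin_one (π : Equiv.Perm (Fin 1)) : properLowerCount π = 0 := by
  simp [properLowerCount, Fin.val_eq_zero]

theorem properUpperCount_of_fin_one (π : Equiv.Perm (Fin 1)) : properUpperCount π = 0 := by
  simp [properUpperCount, Fin.val_eq_zero]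

theorem recordWeightSum_one : recordWeightSum θ ζ 1 = 1 := by
  simp [recordWeightSum, properLowerCount_of_fin_one, properUpperCount_of_fin_one]

theorem lowerRecordWeightSum_one : lowerRecordWeightSum θ ζ 1 = 0 := by
  simp [lowerRecordWeightSum, properLowerCount_of_fin_one]

theorem recordWeightSum_succ_succ (n : ℕ) :
    recordWeightSum θ ζ (n + 2) = (θ + ζ + n) * recordWeightSum θ ζ (n + 1) := by
  rw [recordWeightSum, sum_perm_records_succ (fun l u => θ ^ l * ζ ^ u), recordWeightSum,
    mul_sum]
  refine sum_congr rfl fun σ _ => ?_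
  simp only [pow_succ, nsmul_eq_mul]
  ring

theorem lowerRecordWeightSum_succ_succ (n : ℕ) :
    lowerRecordWeightSum θ ζ (n + 2) =
      (θ + ζ + n) * lowerRecordWeightSum θ ζ (n + 1) + θ * recordWeightSum θ ζ (n + 1) := by
  rw [lowerRecordWeightSum, sum_perm_records_succ (fun l u => (l : R) * θ ^ l * ζ ^ u),
    lowerRecordWeightSum, recordWeightSum, mul_sum, mul_sum, ← sum_add_distrib]
  refine sum_congr rfl fun σ _ => ?_
  simp only [pow_succ, nsmul_eq_mul, Nat.cast_succ]
  ring

theorem recordWeightSum_succ (n : ℕ) :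
    recordWeightSum θ ζ (n + 1) = ∏ j ∈ range n, (θ + ζ + j) := by
  induction n with
  | zero => exact recordWeightSum_one θ ζ
  | succ n ih => rw [recordWeightSum_succ_succ, ih, prod_range_succ, mul_comm]

end WeightSums

theorem lowerRecordWeightSum_succ {θ ζ : ℝ} (hθζ : 0 < θ + ζ) (n : ℕ) :
    lowerRecordWeightSum θ ζ (n + 1) =
      recordWeightSum θ ζ (n + 1) * ∑ k ∈ range n, θ / (θ + ζ + k) := by
  induction n with
  | zero => simp [lowerRecordWeightSum_one]
  | succ n ih =>
    have hn : θ + ζ + n ≠ 0 := by positivity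
    rw [lowerRecordWeightSum_succ_succ, recordWeightSum_succ_succ, ih, sum_range_succ]
    field_simp

theorem expLower_succ {θ ζ : ℝ} (hθζ : 0 < θ + ζ) (n : ℕ) :
    expLower θ ζ (n + 1) = ∑ k ∈ range n, θ / (θ + ζ + k) := by
  have hZ : recordWeightSum θ ζ (n + 1) ≠ 0 := by
    rw [recordWeightSum_succ]
    exact prod_ne_zero_iff.2 fun j _ => by positivity
  rw [expLower, Nat.add_sub_cancel, ← recordWeightSum_succ, ← lowerRecordWeightSum,
    lowerRecordWeightSum_succ hθζ, mul_div_cancel_left₀ _ hZ]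

open Filter Asymptotics

theorem inv_add_one_le_log_add_one_sub_log {x : ℝ} (hx : 0 < x) :
    (x + 1)⁻¹ ≤ Real.log (x + 1) - Real.log x ∧ Real.log (x + 1) - Real.log x ≤ x⁻¹ := by
  have hy : 0 < (x + 1) / x := by positivity
  rw [← Real.log_div (by positivity) hx.ne']
  constructor
  · calc (x + 1)⁻¹ = 1 - ((x + 1) / x)⁻¹ := by field_simp; ring
      _ ≤ _ := Real.one_sub_inv_le_log_of_pos hy
  · calc Real.log ((x + 1) / x) ≤ (x + 1) / x - 1 := Real.log_le_sub_one_of_pos hy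
      _ = x⁻¹ := by field_simp; ring

theorem sum_inv_add_sub_log_mem_Icc {c : ℝ} (hc : 0 < c) (m : ℕ) :
    ∑ k ∈ range m, (c + k)⁻¹ - (Real.log (c + m) - Real.log c) ∈
      Set.Icc 0 (c⁻¹ - (c + m)⁻¹) := by
  induction m with
  | zero => simp
  | succ m ih =>
    obtain ⟨hlo, hhi⟩ := inv_add_one_le_log_add_one_sub_log (x := c + m) (by positivity)
    rw [sum_range_succ, Nat.cast_succ, ← add_assoc]
    exact ⟨by linarith [ih.1], by linarith [ih.2]⟩

theorem tendsto_sum_inv_add_div_log {c : ℝ} (hc : 0 < c) :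
    Tendsto (fun m : ℕ => (∑ k ∈ range m, (c + k)⁻¹) / Real.log (m + 1)) atTop (nhds 1) := by
  have hlog : Tendsto (fun m : ℕ => Real.log (m + 1)) atTop atTop :=
    Real.tendsto_log_atTop.comp (tendsto_atTop_add_const_right _ 1 tendsto_natCast_atTop_atTop)
  have hbounded : (fun m : ℕ => ∑ k ∈ range m, (c + k)⁻¹ - Real.log (m + c)) =O[atTop]
      fun _ => (1 : ℝ) := by
    refine IsBigO.of_bound (c⁻¹ + |Real.log c|) (Eventually.of_forall fun m => ?_)
    obtain ⟨hlo, hhi⟩ := sum_inv_add_sub_log_mem_Icc hc m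
    have : 0 < (c + m)⁻¹ := by positivity
    rw [norm_one, mul_one, Real.norm_eq_abs, abs_le, add_comm (m : ℝ)]
    constructor <;> linarith [neg_abs_le (Real.log c), le_abs_self (Real.log c)]
  have hshift : Tendsto (fun m : ℕ => Real.log (m + c) - Real.log (m + 1)) atTop (nhds 0) := by
    have h := (Real.tendsto_log_comp_add_sub_log c).sub (Real.tendsto_log_comp_add_sub_log 1)
    simp only [sub_sub_sub_cancel_right, sub_zero] at h
    exact h.comp tendsto_natCast_atTop_atTop
  have hlittle : (fun m : ℕ => ∑ k ∈ range m, (c + k)⁻¹ - Real.log (m + 1)) =o[atTop]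
      fun m : ℕ => Real.log (m + 1) :=
    ((hbounded.add (hshift.isBigO_one ℝ)).congr_left fun m => by ring).trans_isLittleO
      ((isLittleO_one_left_iff ℝ).2 (tendsto_norm_atTop_atTop.comp hlog))
  exact (isEquivalent_iff_tendsto_one (hlog.eventually_ne_atTop 0)).1 hlittle.isEquivalent

/-- `E_n(θ,ζ) = Σ_{j=2}^{n} θ/(θ+ζ+j−2)` and `E_n(θ,ζ)/log n → θ`. -/
theorem stmt_8 (θ ζ : ℝ) (hθ : 0 < θ) (hζ : 0 < ζ) :
    (∀ n : ℕ, 2 ≤ n →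
        expLower θ ζ n = ∑ j ∈ Finset.Icc 2 n, θ / (θ + ζ + (j : ℝ) - 2)) ∧
    Filter.Tendsto (fun n : ℕ => expLower θ ζ n / Real.log n) Filter.atTop (nhds θ) := by
  have hθζ : 0 < θ + ζ := add_pos hθ hζ
  refine ⟨fun n hn => ?_, ?_⟩
  · obtain ⟨m, rfl⟩ := Nat.exists_eq_add_of_le' (one_le_two.trans hn)
    rw [expLower_succ hθζ, ← Ico_add_one_right_eq_Icc, sum_Ico_eq_sum_range,
      show m + 1 + 1 - 2 = m by omega]
    refine sum_congr rfl fun k _ => ?_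
    push_cast
    ring
  · rw [← tendsto_add_atTop_iff_nat 1]
    have h := (tendsto_sum_inv_add_div_log hθζ).const_mul θ
    rw [mul_one] at h
    refine h.congr fun m => ?_
    rw [expLower_succ hθζ, ← mul_div_assoc, mul_sum, Nat.cast_succ]
    simp only [div_eq_mul_inv]
end

section
/- Let θ, ζ > 0 and let P^{(θ,ζ)} be the probability measure on Ω = ∏_{n≥1} {1,…,n} under which the coordinates ω_n are independent with ω_1 = 1 and, for n ≥ 2, P(ω_n = 1) = θ/(θ+ζ+n−2), P(ω_n = n) = ζ/(θ+ζ+n−2), and P(ω_n = r) = 1/(θ+ζ+n−2) for 2 ≤ r ≤ n−1. Define V_1(ω) = 1 and, for n ≥ 2, V_n(ω) = V_{n−1}(ω) + 1 if ω_n ≤ V_{n−1}(ω) and V_n(ω) = V_{n−1}(ω) otherwise (so V_n is the first entry π_{n1} of the n-th coherent random permutation). Then there exists a measurable function ρ_0 : Ω → [0,1] such that V_n/n → ρ_0 almost surely under P^{(θ,ζ)}, and the pushforward of P^{(θ,ζ)} under ρ_0 is the beta(θ,ζ) distribution, i.e. the measure on [0,1] with density x ↦ x^{θ−1}(1−x)^{ζ−1}·Γ(θ+ζ)/(Γ(θ)Γ(ζ))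 with respect to Lebesgue measure. -/
open MeasureTheory ENNReal

/-- the space `Ω = ∏_{n≥1} {1,…,n}` of sequences of initial ranks: the coordinate of
index `k` (0-based) encodes `ω_{k+1} ∈ {1,…,k+1}` as an element of `Fin (k+1)`
(value `v` encodes rank `v+1`; rank `1`, i.e. `v = 0`, marks a lower record and
rank `k+1`, i.e. `v = k`, marks an upper record). -/
abbrev RankSpace := (k : ℕ) → Fin (k + 1)

/-- cylinder event `{ω_1 = i_1, …, ω_n = i_n}` -/
def rankCyl {n : ℕ} (i : (j : Fin n) → Fin (j.val + 1)) : Set RankSpace :=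
  {ω | ∀ j : Fin n, ω j.val = i j}

/-- the `P^{(θ,ζ)}`-probability that the coordinate of index `j` equals `v`:
for `j ≥ 1` (encoding `ω_n`, `n = j+1 ≥ 2`): `θ/(θ+ζ+n−2)` for rank `1`,
`ζ/(θ+ζ+n−2)` for rank `n`, and `1/(θ+ζ+n−2)` for each middle rank. -/
noncomputable def tzWt (θ ζ : ℝ) (j : ℕ) (v : Fin (j + 1)) : ℝ≥0∞ :=
  if j = 0 then 1
  else if v.val = 0 then ENNReal.ofReal (θ / (θ + ζ + (j : ℝ) - 1))
  else if v.val = j then ENNReal.ofReal (ζ / (θ + ζ + (j : ℝ) - 1))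
  else ENNReal.ofReal (1 / (θ + ζ + (j : ℝ) - 1))

/-- `firstEntry ω n` is `V_n`, the first entry `π_{n1}` of the `n`-th coherent random
permutation: `V_1 = 1` and `V_n = V_{n−1} + 1` if `ω_n ≤ V_{n−1}`, else `V_n = V_{n−1}`
(the coordinate of index `n−1`, plus `1`, is the initial rank `ω_n ∈ {1,…,n}`). -/
def firstEntry (ω : RankSpace) : ℕ → ℕ
  | 0 => 1
  | 1 => 1
  | (n + 2) =>
      if (ω (n + 1)).val + 1 ≤ firstEntry ω (n + 1) then firstEntry ω (n + 1) + 1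
      else firstEntry ω (n + 1)

/-!
Write `a_n = V_{n+1} + θ - 1` and `D_n = θ + ζ + n`. Given the first `n + 1` ranks, `V` moves up by
one with probability `a_n / D_n`, so `(a_n, D_n)` is a Pólya urn and the ratio of rising factorials
`(a_n)_k / (D_n)_k` is a martingale for every `k`. For `k = 1` it is bounded, hence converges almost
surely to some `ρ₀`, which is also the limit of `V_n / n`. By dominated convergence
`E ρ₀ ^ k = (θ)_k / (θ + ζ)_k`, the `k`-th moment of beta(θ, ζ), and a measure on `[0, 1]` is
determined by its moments.
-/

open MeasureTheory ProbabilityTheory Filter Finset Topology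

noncomputable def risingRatio (k : ℕ) (a D : ℝ) : ℝ := ∏ j ∈ range k, (a + j) / (D + j)

lemma mul_prod_range_add_one (a : ℝ) (k : ℕ) :
    a * ∏ j ∈ range k, (a + 1 + j) = (a + k) * ∏ j ∈ range k, (a + j) := by
  have h := (prod_range_succ' (fun j : ℕ => a + j) k).symm.trans (prod_range_succ _ k)
  simp only [Nat.cast_add, Nat.cast_one, Nat.cast_zero, add_zero, ← add_assoc,
    add_right_comm a _ (1 : ℝ)] at h
  linear_combination h

lemma risingRatio_eq_div (k : ℕ) (a D : ℝ) :
    risingRatio k a D = (∏ j ∈ range k, (a + j)) / ∏ j ∈ range k, (D + j) :=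
  prod_div_distrib ..

lemma risingRatio_mem_Icc {a D : ℝ} (ha : 0 ≤ a) (haD : a ≤ D) (k : ℕ) :
    risingRatio k a D ∈ Set.Icc 0 1 := by
  have hj (j : ℕ) : (0 : ℝ) ≤ j := j.cast_nonneg
  have hfac (j : ℕ) : 0 ≤ (a + j) / (D + j) :=
    div_nonneg (by linarith [hj j]) (by linarith [hj j])
  exact ⟨prod_nonneg fun j _ => hfac j, prod_le_one (fun j _ => hfac j) fun j _ =>
    div_le_one_of_le₀ (by linarith) (by linarith [hj j])⟩

@[simp]
lemma risingRatio_one (a D : ℝ) : risingRatio 1 a D = a / D := by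
  simp [risingRatio]

lemma risingRatio_urn_step {a D : ℝ} (hD : 0 < D) (k : ℕ) :
    (1 - a / D) * risingRatio k a (D + 1) + a / D * risingRatio k (a + 1) (D + 1)
      = risingRatio k a D := by
  have hQ : 0 < ∏ j ∈ range k, (D + j) := prod_pos fun j _ => by positivity
  have hQ' : 0 < ∏ j ∈ range k, (D + 1 + j) := prod_pos fun j _ => by positivity
  have ha := mul_prod_range_add_one a k
  have hd := mul_prod_range_add_one D k
  simp only [risingRatio_eq_div]
  field_simp
  linear_combination (∏ j ∈ range k, (D + ↑j)) * ha - (∏ j ∈ range k, (a + ↑j)) * hd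

lemma Filter.Tendsto.add_div_add_const {α : Type*} {l : Filter α} {a D : α → ℝ} {r : ℝ}
    (h : Tendsto (fun x => a x / D x) l (𝓝 r)) (hD : Tendsto D l atTop) (c d : ℝ) :
    Tendsto (fun x => (a x + c) / (D x + d)) l (𝓝 r) := by
  have hDd : Tendsto (fun x => D x + d) l atTop := tendsto_atTop_add_const_right _ d hD
  have hlim := h.mul ((tendsto_const_nhds (x := (1 : ℝ))).sub
    (hDd.const_div_atTop d)) |>.add (hDd.const_div_atTop c)
  rw [sub_zero, mul_one, add_zero] at hlim
  refine hlim.congr' ?_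
  filter_upwards [hD.eventually_gt_atTop 0, hDd.eventually_gt_atTop 0] with x hx hxd
  field_simp
  ring

lemma tendsto_risingRatio {α : Type*} {l : Filter α} {a D : α → ℝ} {r : ℝ}
    (h : Tendsto (fun x => a x / D x) l (𝓝 r)) (hD : Tendsto D l atTop) (k : ℕ) :
    Tendsto (fun x => risingRatio k (a x) (D x)) l (𝓝 (r ^ k)) := by
  simpa [risingRatio] using tendsto_finsetProd (range k) fun j _ => h.add_div_add_const hD j j

abbrev RankPrefix (n : ℕ) := (j : Fin n) → Fin (j.val + 1)

namespace RankSpace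

def initRanks (n : ℕ) (ω : RankSpace) : RankPrefix n := fun j => ω j

@[fun_prop]
lemma measurable_initRanks (n : ℕ) : Measurable (initRanks n) :=
  measurable_pi_lambda _ fun j => measurable_pi_apply j.val

lemma init_initRanks (n : ℕ) (ω : RankSpace) :
    Fin.init (initRanks (n + 1) ω) = initRanks n ω := rfl

lemma preimage_initRanks_singleton {n : ℕ} (i : RankPrefix n) :
    initRanks n ⁻¹' {i} = rankCyl i := by
  ext ω
  simp [rankCyl, initRanks, funext_iff]

end RankSpace

lemma firstEntry_congr {ω ω' : RankSpace} {n : ℕ} (h : ∀ k < n, ω k = ω' k) :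
    firstEntry ω n = firstEntry ω' n := by
  induction n with
  | zero => rfl
  | succ m ih =>
    cases m with
    | zero => rfl
    | succ m =>
      simp only [firstEntry, ih fun k hk => h k (by omega), h (m + 1) (by omega)]

lemma one_le_firstEntry (ω : RankSpace) (n : ℕ) : 1 ≤ firstEntry ω n := by
  induction n using Nat.strong_induction_on with
  | _ n ih =>
    match n with
    | 0 | 1 => exact le_rfl
    | n + 2 =>
      have := ih (n + 1) (by omega)
      simp only [firstEntry]
      split <;> omega

lemma firstEntry_succ_le (ω : RankSpace) (n : ℕ) : firstEntry ω (n + 1) ≤ n + 1 := by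
  induction n with
  | zero => exact le_rfl
  | succ m ih =>
    simp only [firstEntry]
    split <;> omega

namespace RankPrefix

def extend {n : ℕ} (i : RankPrefix n) : RankSpace := fun k => if h : k < n then i ⟨k, h⟩ else 0

def firstEntry {n : ℕ} (i : RankPrefix n) : ℕ := _root_.firstEntry i.extend n

lemma firstEntry_snoc {n : ℕ} (i : RankPrefix (n + 1)) (v : Fin (n + 2)) :
    firstEntry (Fin.snoc i v : RankPrefix (n + 2))
      = if v.val + 1 ≤ i.firstEntry then i.firstEntry + 1 else i.firstEntry := by
  have hinit : _root_.firstEntry (extend (Fin.snoc i v : RankPrefix (n + 2))) (n + 1)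
      = i.firstEntry := firstEntry_congr fun k hk => by
    simp [extend, hk, show k < n + 2 by omega, Fin.snoc]
  have hlast : extend (Fin.snoc i v : RankPrefix (n + 2)) (n + 1) = v := by
    simp [extend, Fin.snoc]
  simp only [firstEntry, _root_.firstEntry, hinit, hlast]
  rfl

lemma sum_snoc {n : ℕ} (g : RankPrefix (n + 1) → ℝ) :
    ∑ i : RankPrefix (n + 1), g i = ∑ i : RankPrefix n, ∑ v : Fin (n + 1), g (Fin.snoc i v) := by
  rw [← (Fin.snocEquiv fun j : Fin (n + 1) => Fin (j.val + 1)).sum_comp g,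
    Fintype.sum_prod_type, Finset.sum_comm]
  rfl

end RankPrefix

lemma firstEntry_eq_initRanks (ω : RankSpace) (n : ℕ) :
    firstEntry ω n = (RankSpace.initRanks n ω).firstEntry :=
  firstEntry_congr fun k hk => by simp [RankPrefix.extend, RankSpace.initRanks, hk]

section Weights

variable {θ ζ : ℝ}

/-- The probability that `ω_{n+2}` is the rank `k + 1`. -/
noncomputable def urnWeight (θ ζ : ℝ) (n k : ℕ) : ℝ :=
  (if k = 0 then θ else if k = n + 1 then ζ else 1) / (θ + ζ + n)

lemma tzWt_succ_toReal (hθ : 0 < θ) (hζ : 0 < ζ) (n : ℕ) (v : Fin (n + 2)) :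
    (tzWt θ ζ (n + 1) v).toReal = urnWeight θ ζ n v := by
  have hD : θ + ζ + ((n + 1 : ℕ) : ℝ) - 1 = θ + ζ + n := by push_cast; ring
  unfold tzWt urnWeight
  simp only [Nat.succ_ne_zero, if_false, hD]
  split_ifs <;> rw [ENNReal.toReal_ofReal (by positivity)]

lemma sum_range_urnWeight {n m : ℕ} (hm : m ≤ n) :
    ∑ k ∈ range (m + 1), urnWeight θ ζ n k = (θ + m) / (θ + ζ + n) := by
  induction m with
  | zero => simp [urnWeight]
  | succ m ih =>
    rw [sum_range_succ, ih (by omega), urnWeight, if_neg (by omega), if_neg (by omega),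
      ← add_div]
    push_cast
    ring_nf

lemma sum_urnWeight (hθ : 0 < θ) (hζ : 0 < ζ) (n : ℕ) :
    ∑ k ∈ range (n + 2), urnWeight θ ζ n k = 1 := by
  rw [sum_range_succ, sum_range_urnWeight le_rfl, urnWeight, if_neg (by omega), if_pos rfl,
    ← add_div, div_eq_one_iff_eq (by positivity)]
  ring

noncomputable def urnTransition (θ ζ : ℝ) (n : ℕ) (g : ℕ → ℝ) (V : ℕ) : ℝ :=
  (1 - (V + θ - 1) / (θ + ζ + n)) * g V + (V + θ - 1) / (θ + ζ + n) * g (V + 1)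

/-- The new rank is at most `V` for the `V` lowest ranks, of total weight `θ + V - 1`. -/
lemma sum_tzWt_mul_eq_urnTransition (hθ : 0 < θ) (hζ : 0 < ζ) {n V : ℕ} (h1 : 1 ≤ V) (h2 : V ≤ n + 1)
    (f : ℕ → ℝ) :
    ∑ v : Fin (n + 2), (tzWt θ ζ (n + 1) v).toReal * f (if v.val + 1 ≤ V then V + 1 else V)
      = urnTransition θ ζ n f V := by
  have hlow : ∑ k ∈ range V, urnWeight θ ζ n k = (V + θ - 1) / (θ + ζ + n) := by
    obtain ⟨m, rfl⟩ : ∃ m, V = m + 1 := ⟨V - 1, by omega⟩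
    rw [sum_range_urnWeight (by omega)]
    push_cast
    ring_nf
  have hhigh : ∑ k ∈ Ico V (n + 2), urnWeight θ ζ n k = 1 - (V + θ - 1) / (θ + ζ + n) := by
    rw [← hlow, ← sum_urnWeight hθ hζ n, ← sum_range_add_sum_Ico _ (by omega : V ≤ n + 2)]
    ring
  simp only [tzWt_succ_toReal hθ hζ]
  rw [Fin.sum_univ_eq_sum_range (fun k => urnWeight θ ζ n k * f (if k + 1 ≤ V then V + 1 else V)),
    ← sum_range_add_sum_Ico _ (by omega : V ≤ n + 2)]
  have hgrow : ∀ k ∈ range V, urnWeight θ ζ n k * f (if k + 1 ≤ V then V + 1 else V)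
      = urnWeight θ ζ n k * f (V + 1) := fun k hk => by rw [if_pos (by simp at hk; omega)]
  have hstay : ∀ k ∈ Ico V (n + 2), urnWeight θ ζ n k * f (if k + 1 ≤ V then V + 1 else V)
      = urnWeight θ ζ n k * f V := fun k hk => by rw [if_neg (by simp at hk; omega)]
  rw [sum_congr rfl hgrow, sum_congr rfl hstay, ← sum_mul, ← sum_mul, hlow, hhigh, urnTransition]
  ring

end Weights

section Integrals

open RankSpace

variable {θ ζ : ℝ} {P : Measure RankSpace}

noncomputable def RankPrefix.weight (θ ζ : ℝ) {n : ℕ} (i : RankPrefix n) : ℝ :=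
  ∏ j, (tzWt θ ζ j.val (i j)).toReal

lemma RankPrefix.weight_snoc {n : ℕ} (i : RankPrefix (n + 1)) (v : Fin (n + 2)) :
    weight θ ζ (Fin.snoc i v : RankPrefix (n + 2))
      = weight θ ζ i * (tzWt θ ζ (n + 1) v).toReal := by
  rw [weight, weight, Fin.prod_univ_castSucc]
  simp only [Fin.snoc_castSucc, Fin.snoc_last, Fin.val_castSucc, Fin.val_last]

lemma integral_comp_initRanks [IsFiniteMeasure P]
    (hP : ∀ (n : ℕ) (i : RankPrefix n), P (rankCyl i) = ∏ j : Fin n, tzWt θ ζ j.val (i j))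
    (n : ℕ) (f : RankPrefix n → ℝ) :
    ∫ ω, f (initRanks n ω) ∂P = ∑ i, RankPrefix.weight θ ζ i * f i := by
  rw [← integral_map (by fun_prop) (measurable_of_countable f).aestronglyMeasurable,
    integral_fintype Integrable.of_finite]
  refine sum_congr rfl fun i _ => ?_
  rw [smul_eq_mul, measureReal_def, Measure.map_apply (by fun_prop) (measurableSet_singleton i),
    preimage_initRanks_singleton, hP, ENNReal.toReal_prod, RankPrefix.weight]

lemma integral_mul_firstEntry_succ [IsFiniteMeasure P] (hθ : 0 < θ) (hζ : 0 < ζ)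
    (hP : ∀ (n : ℕ) (i : RankPrefix n), P (rankCyl i) = ∏ j : Fin n, tzWt θ ζ j.val (i j))
    (n : ℕ) (F : RankPrefix (n + 1) → ℝ) (g : ℕ → ℝ) :
    ∫ ω, F (initRanks (n + 1) ω) * g (firstEntry ω (n + 2)) ∂P
      = ∫ ω, F (initRanks (n + 1) ω) * urnTransition θ ζ n g (firstEntry ω (n + 1)) ∂P := by
  have hL : ∫ ω, F (initRanks (n + 1) ω) * g (firstEntry ω (n + 2)) ∂P
      = ∑ i : RankPrefix (n + 2), RankPrefix.weight θ ζ i * (F (Fin.init i) * g i.firstEntry) := by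
    rw [← integral_comp_initRanks hP]
    simp only [init_initRanks, ← firstEntry_eq_initRanks]
  have hR : ∫ ω, F (initRanks (n + 1) ω) * urnTransition θ ζ n g (firstEntry ω (n + 1)) ∂P
      = ∑ i : RankPrefix (n + 1),
          RankPrefix.weight θ ζ i * (F i * urnTransition θ ζ n g i.firstEntry) := by
    rw [← integral_comp_initRanks hP]
    simp only [← firstEntry_eq_initRanks]
  rw [hL, hR, RankPrefix.sum_snoc]
  refine sum_congr rfl fun i _ => ?_
  simp only [RankPrefix.weight_snoc, Fin.init_snoc, RankPrefix.firstEntry_snoc]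
  have hV1 : 1 ≤ i.firstEntry := one_le_firstEntry _ _
  have hV2 : i.firstEntry ≤ n + 1 := firstEntry_succ_le _ _
  rw [← sum_tzWt_mul_eq_urnTransition hθ hζ hV1 hV2, mul_sum, mul_sum]
  exact sum_congr rfl fun v _ => by ring

end Integrals

section Martingale

open RankSpace

variable {θ ζ : ℝ} {P : Measure RankSpace}

noncomputable def urnRatio (θ ζ : ℝ) (k n : ℕ) (ω : RankSpace) : ℝ :=
  risingRatio k (firstEntry ω (n + 1) + θ - 1) (θ + ζ + n)

def rankFiltration : Filtration ℕ (inferInstance : MeasurableSpace RankSpace) where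
  seq n := MeasurableSpace.comap (initRanks (n + 1)) inferInstance
  mono' := monotone_nat_of_le_succ fun n => by
    rw [show initRanks (n + 1) = Fin.init ∘ initRanks (n + 2) from rfl,
      ← MeasurableSpace.comap_comp]
    exact MeasurableSpace.comap_mono
      (measurable_pi_lambda _ fun _ => measurable_pi_apply _).comap_le
  le' n := (measurable_initRanks (n + 1)).comap_le

lemma urnRatio_eq_comp (θ ζ : ℝ) (k n : ℕ) :
    urnRatio θ ζ k n = (fun i : RankPrefix (n + 1) =>
      risingRatio k (i.firstEntry + θ - 1) (θ + ζ + n)) ∘ initRanks (n + 1) :=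
  funext fun ω => by rw [urnRatio, firstEntry_eq_initRanks]; rfl

lemma stronglyAdapted_urnRatio (θ ζ : ℝ) (k : ℕ) :
    StronglyAdapted rankFiltration (urnRatio θ ζ k) := fun n => by
  rw [urnRatio_eq_comp]
  exact ((measurable_of_countable _).comp (comap_measurable _)).stronglyMeasurable

@[fun_prop]
lemma measurable_urnRatio (θ ζ : ℝ) (k n : ℕ) : Measurable (urnRatio θ ζ k n) := by
  rw [urnRatio_eq_comp]
  exact (measurable_of_countable _).comp (measurable_initRanks _)

lemma urnRatio_mem_Icc (hθ : 0 < θ) (hζ : 0 < ζ) (k n : ℕ) (ω : RankSpace) :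
    urnRatio θ ζ k n ω ∈ Set.Icc 0 1 := by
  have h1 : (1 : ℝ) ≤ firstEntry ω (n + 1) := by exact_mod_cast one_le_firstEntry ω (n + 1)
  have h2 : (firstEntry ω (n + 1) : ℝ) ≤ n + 1 := by exact_mod_cast firstEntry_succ_le ω n
  exact risingRatio_mem_Icc (by linarith) (by linarith) k

lemma norm_urnRatio_le_one (hθ : 0 < θ) (hζ : 0 < ζ) (k n : ℕ) (ω : RankSpace) :
    ‖urnRatio θ ζ k n ω‖ ≤ 1 := by
  obtain ⟨h0, h1⟩ := urnRatio_mem_Icc hθ hζ k n ω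
  rwa [Real.norm_of_nonneg h0]

lemma integrable_urnRatio [IsFiniteMeasure P] (hθ : 0 < θ) (hζ : 0 < ζ) (k n : ℕ) :
    Integrable (urnRatio θ ζ k n) P :=
  .of_bound (by fun_prop) 1 (.of_forall (norm_urnRatio_le_one hθ hζ k n))

lemma urnTransition_risingRatio (hθ : 0 < θ) (hζ : 0 < ζ) (k n V : ℕ) :
    urnTransition θ ζ n (fun m : ℕ => risingRatio k (m + θ - 1) (θ + ζ + (n + 1 : ℕ))) V
      = risingRatio k (V + θ - 1) (θ + ζ + n) := by
  have hV : ((V + 1 : ℕ) : ℝ) + θ - 1 = V + θ - 1 + 1 := by push_cast; ring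
  have hn : θ + ζ + ((n + 1 : ℕ) : ℝ) = θ + ζ + n + 1 := by push_cast; ring
  simp only [urnTransition]
  rw [hV, hn, risingRatio_urn_step (by positivity)]

lemma setIntegral_urnRatio_succ [IsFiniteMeasure P] (hθ : 0 < θ) (hζ : 0 < ζ)
    (hP : ∀ (n : ℕ) (i : RankPrefix n), P (rankCyl i) = ∏ j : Fin n, tzWt θ ζ j.val (i j))
    (k n : ℕ) (t : Set (RankPrefix (n + 1))) :
    ∫ ω in initRanks (n + 1) ⁻¹' t, urnRatio θ ζ k (n + 1) ω ∂P
      = ∫ ω in initRanks (n + 1) ⁻¹' t, urnRatio θ ζ k n ω ∂P := by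
  have hind (m : ℕ) : ∫ ω in initRanks (n + 1) ⁻¹' t, urnRatio θ ζ k m ω ∂P
      = ∫ ω, t.indicator 1 (initRanks (n + 1) ω) * urnRatio θ ζ k m ω ∂P := by
    rw [← integral_indicator (measurable_initRanks _ t.to_countable.measurableSet)]
    congr 1 with ω
    by_cases h : initRanks (n + 1) ω ∈ t <;> simp [h]
  have hstep := integral_mul_firstEntry_succ hθ hζ hP n (t.indicator 1)
    fun m : ℕ => risingRatio k (m + θ - 1) (θ + ζ + (n + 1 : ℕ))
  simp only [urnTransition_risingRatio hθ hζ] at hstep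
  rw [hind, hind]
  exact hstep

lemma martingale_urnRatio [IsFiniteMeasure P] (hθ : 0 < θ) (hζ : 0 < ζ)
    (hP : ∀ (n : ℕ) (i : RankPrefix n), P (rankCyl i) = ∏ j : Fin n, tzWt θ ζ j.val (i j))
    (k : ℕ) : Martingale (urnRatio θ ζ k) rankFiltration P := by
  refine martingale_nat (stronglyAdapted_urnRatio θ ζ k) (integrable_urnRatio hθ hζ k)
    fun n => ae_eq_condExp_of_forall_setIntegral_eq _ (integrable_urnRatio hθ hζ k (n + 1))
      (fun _ _ _ => (integrable_urnRatio hθ hζ k n).integrableOn) ?_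
      (stronglyAdapted_urnRatio θ ζ k n).aestronglyMeasurable
  rintro _ ⟨t, -, rfl⟩ -
  exact (setIntegral_urnRatio_succ hθ hζ hP k n t).symm

lemma integral_urnRatio [IsProbabilityMeasure P] (hθ : 0 < θ) (hζ : 0 < ζ)
    (hP : ∀ (n : ℕ) (i : RankPrefix n), P (rankCyl i) = ∏ j : Fin n, tzWt θ ζ j.val (i j))
    (k n : ℕ) : ∫ ω, urnRatio θ ζ k n ω ∂P = risingRatio k θ (θ + ζ) := by
  induction n with
  | zero => simp [urnRatio, firstEntry]
  | succ n ih =>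
    simpa [ih] using setIntegral_urnRatio_succ hθ hζ hP k n Set.univ

end Martingale

section Limit

variable {θ ζ : ℝ} {P : Measure RankSpace}

/-- An everywhere defined, measurable version of the almost sure limit of `urnRatio θ ζ 1`. -/
noncomputable def urnLimit (θ ζ : ℝ) (ω : RankSpace) : ℝ :=
  limsup (fun n => urnRatio θ ζ 1 n ω) atTop

lemma measurable_urnLimit (θ ζ : ℝ) : Measurable (urnLimit θ ζ) :=
  .limsup fun n => measurable_urnRatio θ ζ 1 n

lemma urnLimit_mem_Icc (hθ : 0 < θ) (hζ : 0 < ζ) (ω : RankSpace) :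
    urnLimit θ ζ ω ∈ Set.Icc 0 1 := by
  have hmem := fun n => urnRatio_mem_Icc hθ hζ 1 n ω
  have hbdd : IsBoundedUnder (· ≤ ·) atTop fun n => urnRatio θ ζ 1 n ω :=
    isBoundedUnder_of ⟨1, fun n => (hmem n).2⟩
  exact ⟨le_limsup_of_frequently_le (.of_forall fun n => (hmem n).1) hbdd,
    limsup_le_of_le (isCoboundedUnder_le_of_le atTop fun n => (hmem n).1)
      (.of_forall fun n => (hmem n).2)⟩

lemma ae_tendsto_urnRatio_one [IsFiniteMeasure P] (hθ : 0 < θ) (hζ : 0 < ζ)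
    (hP : ∀ (n : ℕ) (i : RankPrefix n), P (rankCyl i) = ∏ j : Fin n, tzWt θ ζ j.val (i j)) :
    ∀ᵐ ω ∂P, Tendsto (fun n => urnRatio θ ζ 1 n ω) atTop (𝓝 (urnLimit θ ζ ω)) := by
  have hbdd (n : ℕ) : eLpNorm (urnRatio θ ζ 1 n) 1 P ≤ measureUnivNNReal P := by
    simpa using eLpNorm_le_of_ae_bound (p := 1) (.of_forall (norm_urnRatio_le_one hθ hζ 1 n))
  filter_upwards [(martingale_urnRatio hθ hζ hP 1).submartingale.exists_ae_tendsto_of_bdd hbdd]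
    with ω ⟨c, hc⟩
  rwa [urnLimit, hc.limsup_eq]

lemma ae_tendsto_firstEntry_div [IsFiniteMeasure P] (hθ : 0 < θ) (hζ : 0 < ζ)
    (hP : ∀ (n : ℕ) (i : RankPrefix n), P (rankCyl i) = ∏ j : Fin n, tzWt θ ζ j.val (i j)) :
    ∀ᵐ ω ∂P, Tendsto (fun n => (firstEntry ω n : ℝ) / n) atTop (𝓝 (urnLimit θ ζ ω)) := by
  filter_upwards [ae_tendsto_urnRatio_one hθ hζ hP] with ω hω
  simp only [urnRatio, risingRatio_one] at hω
  refine (tendsto_add_atTop_iff_nat 1).mp ?_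
  convert hω.add_div_add_const (tendsto_atTop_add_const_left _ _ tendsto_natCast_atTop_atTop)
    (1 - θ) (1 - θ - ζ) using 2 with n
  push_cast
  ring_nf

lemma integral_urnLimit_pow [IsProbabilityMeasure P] (hθ : 0 < θ) (hζ : 0 < ζ)
    (hP : ∀ (n : ℕ) (i : RankPrefix n), P (rankCyl i) = ∏ j : Fin n, tzWt θ ζ j.val (i j))
    (k : ℕ) : ∫ ω, urnLimit θ ζ ω ^ k ∂P = risingRatio k θ (θ + ζ) := by
  have hlim : ∀ᵐ ω ∂P, Tendsto (fun n => urnRatio θ ζ k n ω) atTop (𝓝 (urnLimit θ ζ ω ^ k)) := by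
    filter_upwards [ae_tendsto_urnRatio_one hθ hζ hP] with ω hω
    simp only [urnRatio, risingRatio_one] at hω
    exact tendsto_risingRatio hω (tendsto_atTop_add_const_left _ _ tendsto_natCast_atTop_atTop) k
  have hdom := tendsto_integral_of_dominated_convergence (fun _ => (1 : ℝ))
    (fun n => (measurable_urnRatio θ ζ k n).aestronglyMeasurable) (integrable_const 1)
    (fun n => .of_forall (norm_urnRatio_le_one hθ hζ k n)) hlim
  simp only [integral_urnRatio hθ hζ hP] at hdom
  exact tendsto_nhds_unique hdom tendsto_const_nhds

end Limit

namespace ProbabilityTheory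

variable {α β : ℝ}

lemma beta_add_one_left (hα : 0 < α) (hβ : 0 < β) :
    beta (α + 1) β = beta α β * (α / (α + β)) := by
  have hG := (Real.Gamma_pos_of_pos (add_pos hα hβ)).ne'
  rw [beta, beta, add_right_comm, Real.Gamma_add_one hα.ne', Real.Gamma_add_one (by positivity)]
  field_simp

lemma beta_add_nat_left_div (hα : 0 < α) (hβ : 0 < β) (k : ℕ) :
    beta (α + k) β / beta α β = risingRatio k α (α + β) := by
  induction k with
  | zero => simp [risingRatio, (beta_pos hα hβ).ne']
  | succ k ih =>
    rw [Nat.cast_succ, ← add_assoc, beta_add_one_left (by positivity) hβ, mul_div_right_comm, ih]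
    simp only [risingRatio, prod_range_succ]
    ring

lemma betaPDFReal_nonneg (hα : 0 < α) (hβ : 0 < β) (x : ℝ) : 0 ≤ betaPDFReal α β x := by
  by_cases hx : 0 < x ∧ x < 1
  · exact (betaPDFReal_pos hx.1 hx.2 hα hβ).le
  · simp [betaPDFReal, hx]

lemma measurable_betaPDF (α β : ℝ) : Measurable (betaPDF α β) :=
  (measurable_betaPDFReal α β).ennreal_ofReal

lemma integral_betaPDFReal (hα : 0 < α) (hβ : 0 < β) : ∫ x, betaPDFReal α β x = 1 := by
  rw [integral_eq_lintegral_of_nonneg_ae (.of_forall (betaPDFReal_nonneg hα hβ))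
    (measurable_betaPDFReal α β).aestronglyMeasurable]
  have h := lintegral_betaPDF_eq_one hα hβ
  simp only [betaPDF] at h
  simp [h]

lemma betaPDFReal_mul_pow (hα : 0 < α) (hβ : 0 < β) (k : ℕ) (x : ℝ) :
    betaPDFReal α β x * x ^ k = beta (α + k) β / beta α β * betaPDFReal (α + k) β x := by
  by_cases hx : 0 < x ∧ x < 1
  · have hB := (beta_pos hα hβ).ne'
    have hBk := (beta_pos (by positivity : 0 < α + k) hβ).ne'
    rw [betaPDFReal, betaPDFReal, if_pos hx, if_pos hx, add_sub_right_comm,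
      Real.rpow_add_natCast hx.1.ne']
    field_simp
  · simp [betaPDFReal, hx]

lemma integral_pow_betaMeasure (hα : 0 < α) (hβ : 0 < β) (k : ℕ) :
    ∫ x, x ^ k ∂betaMeasure α β = risingRatio k α (α + β) := by
  rw [betaMeasure, integral_withDensity_eq_integral_toReal_smul (measurable_betaPDF α β)
    (.of_forall fun _ => ENNReal.ofReal_lt_top)]
  simp only [betaPDF, ENNReal.toReal_ofReal (betaPDFReal_nonneg hα hβ _), smul_eq_mul,
    betaPDFReal_mul_pow hα hβ, integral_const_mul,
    integral_betaPDFReal (by positivity : 0 < α + k) hβ, mul_one]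
  exact beta_add_nat_left_div hα hβ k

lemma ae_mem_Icc_betaMeasure (α β : ℝ) : ∀ᵐ x ∂betaMeasure α β, x ∈ Set.Icc 0 1 := by
  rw [betaMeasure, ae_withDensity_iff (measurable_betaPDF α β)]
  refine .of_forall fun x hx => ?_
  by_contra hIcc
  have hx' : ¬ (0 < x ∧ x < 1) := fun h => hIcc ⟨h.1.le, h.2.le⟩
  exact hx (by simp [betaPDF, betaPDFReal, hx'])

lemma withDensity_Icc_eq_betaMeasure (α β : ℝ) :
    (volume.restrict (Set.Icc (0 : ℝ) 1)).withDensity (fun x => ENNReal.ofReal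
      (x ^ (α - 1) * (1 - x) ^ (β - 1) * Real.Gamma (α + β) / (Real.Gamma α * Real.Gamma β)))
      = betaMeasure α β := by
  rw [← withDensity_indicator measurableSet_Icc, betaMeasure]
  refine withDensity_congr_ae ?_
  filter_upwards [(Set.toFinite ({0, 1} : Set ℝ)).countable.ae_notMem volume] with x hx
  simp only [Set.mem_insert_iff, Set.mem_singleton_iff, not_or] at hx
  by_cases hIoo : 0 < x ∧ x < 1
  · rw [Set.indicator_of_mem (show x ∈ Set.Icc (0 : ℝ) 1 from ⟨hIoo.1.le, hIoo.2.le⟩), betaPDF,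
      betaPDFReal, if_pos hIoo, beta, one_div_div]
    ring_nf
  · have hIcc : x ∉ Set.Icc (0 : ℝ) 1 := fun h =>
      hIoo ⟨h.1.lt_of_ne (Ne.symm hx.1), h.2.lt_of_ne hx.2⟩
    simp [Set.indicator_of_notMem hIcc, betaPDF, betaPDFReal, hIoo]

end ProbabilityTheory

lemma Continuous.integrable_of_ae_mem_Icc {μ : Measure ℝ} [IsFiniteMeasure μ] {g : ℝ → ℝ}
    (hg : Continuous g) {a b : ℝ} (hμ : ∀ᵐ x ∂μ, x ∈ Set.Icc a b) : Integrable g μ := by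
  obtain ⟨C, hC⟩ := isCompact_Icc.exists_bound_of_continuousOn hg.continuousOn
  exact .of_bound hg.aestronglyMeasurable C (by filter_upwards [hμ] using hC)

namespace MeasureTheory

open Polynomial

variable {μ ν : Measure ℝ} {a b : ℝ}

lemma integral_eval_eq_sum_moments [IsFiniteMeasure μ] (hμ : ∀ᵐ x ∂μ, x ∈ Set.Icc a b)
    (p : ℝ[X]) :
    ∫ x, p.eval x ∂μ = ∑ j ∈ range (p.natDegree + 1), p.coeff j * ∫ x, x ^ j ∂μ := by
  simp_rw [eval_eq_sum_range, ← integral_const_mul]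
  exact integral_finsetSum _ fun j _ =>
    ((continuous_pow j).integrable_of_ae_mem_Icc hμ).const_mul _

lemma dist_integral_le_of_ae_mem_Icc [IsFiniteMeasure μ] (hμ : ∀ᵐ x ∂μ, x ∈ Set.Icc a b)
    {f g : ℝ → ℝ} (hf : Continuous f) (hg : Continuous g) {ε : ℝ}
    (hfg : ∀ x ∈ Set.Icc a b, |f x - g x| ≤ ε) :
    dist (∫ x, f x ∂μ) (∫ x, g x ∂μ) ≤ ε * μ.real Set.univ := by
  rw [dist_eq_norm,
    ← integral_sub (hf.integrable_of_ae_mem_Icc hμ) (hg.integrable_of_ae_mem_Icc hμ)]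
  exact norm_integral_le_of_norm_le_const (by filter_upwards [hμ] with x hx using hfg x hx)

/-- By Weierstrass approximation, polynomials can replace bounded continuous test functions. -/
theorem Measure.ext_of_moments_of_ae_mem_Icc [IsFiniteMeasure μ] [IsFiniteMeasure ν]
    (hμ : ∀ᵐ x ∂μ, x ∈ Set.Icc a b) (hν : ∀ᵐ x ∂ν, x ∈ Set.Icc a b)
    (h : ∀ k : ℕ, ∫ x, x ^ k ∂μ = ∫ x, x ^ k ∂ν) : μ = ν := by
  refine ext_of_forall_integral_eq_of_IsFiniteMeasure fun f => eq_of_forall_dist_le fun ε hε => ?_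
  set C := μ.real Set.univ + ν.real Set.univ + 1
  have hC : 0 < C := by positivity
  obtain ⟨p, hp⟩ := exists_polynomial_near_of_continuousOn a b f f.continuous.continuousOn
    (ε / C) (by positivity)
  have hfp : ∀ x ∈ Set.Icc a b, |f x - p.eval x| ≤ ε / C := fun x hx =>
    (abs_sub_comm _ _).trans_le (hp x hx).le
  have hpμν : ∫ x, p.eval x ∂μ = ∫ x, p.eval x ∂ν := by
    simp only [integral_eval_eq_sum_moments hμ, integral_eval_eq_sum_moments hν, h]
  calc dist (∫ x, f x ∂μ) (∫ x, f x ∂ν)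
      ≤ dist (∫ x, f x ∂μ) (∫ x, p.eval x ∂μ) + dist (∫ x, f x ∂ν) (∫ x, p.eval x ∂ν) := by
        rw [hpμν, dist_comm (∫ x, f x ∂ν)]
        exact dist_triangle _ _ _
    _ ≤ ε / C * μ.real Set.univ + ε / C * ν.real Set.univ :=
        add_le_add (dist_integral_le_of_ae_mem_Icc hμ f.continuous p.continuous hfp)
          (dist_integral_le_of_ae_mem_Icc hν f.continuous p.continuous hfp)
    _ ≤ ε := by
        rw [← mul_add, div_mul_eq_mul_div, div_le_iff₀ hC]
        nlinarith

end MeasureTheory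

/-- under `P^{(θ,ζ)}` there is a measurable `ρ₀ : Ω → [0,1]` with
`V_n/n → ρ₀` a.s., and the law of `ρ₀` is beta`(θ,ζ)`. -/
theorem stmt_16 (θ ζ : ℝ) (hθ : 0 < θ) (hζ : 0 < ζ)
    (P : Measure RankSpace) [IsProbabilityMeasure P]
    (hP : ∀ (n : ℕ) (i : (j : Fin n) → Fin (j.val + 1)),
      P (rankCyl i) = ∏ j : Fin n, tzWt θ ζ j.val (i j)) :
    ∃ ρ : RankSpace → ℝ, Measurable ρ ∧ (∀ ω, ρ ω ∈ Set.Icc (0 : ℝ) 1) ∧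
      (∀ᵐ ω ∂P, Filter.Tendsto (fun n : ℕ => (firstEntry ω n : ℝ) / (n : ℝ))
        Filter.atTop (nhds (ρ ω))) ∧
      Measure.map ρ P
        = (volume.restrict (Set.Icc (0 : ℝ) 1)).withDensity fun x =>
            ENNReal.ofReal
              (x ^ (θ - 1) * (1 - x) ^ (ζ - 1) * Real.Gamma (θ + ζ)
                / (Real.Gamma θ * Real.Gamma ζ)) := by
  have hρ := measurable_urnLimit θ ζ
  refine ⟨urnLimit θ ζ, hρ, urnLimit_mem_Icc hθ hζ, ae_tendsto_firstEntry_div hθ hζ hP, ?_⟩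
  rw [withDensity_Icc_eq_betaMeasure]
  have := isProbabilityMeasureBeta hθ hζ
  refine Measure.ext_of_moments_of_ae_mem_Icc
    ((ae_map_iff hρ.aemeasurable measurableSet_Icc).mpr (.of_forall (urnLimit_mem_Icc hθ hζ)))
    (ae_mem_Icc_betaMeasure θ ζ) fun k => ?_
  rw [integral_map hρ.aemeasurable (by fun_prop), integral_urnLimit_pow hθ hζ hP,
    integral_pow_betaMeasure hθ hζ]
end
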